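/- arXiv:2304.01432 — 11 statements merged into one kernel-verified Lean document; each statement's English description precedes it below -/
import Mathlib

section
/- Let 𝒟 ⊆ ℝ^n be a nonempty compact convex set, let f : ℝ^n → ℝ be convex and differentiable, let x* minimize f over 𝒟, and let c > 0. Suppose x : [0,∞) → 𝒟 is differentiable and satisfies the Frank–Wolfe flow x'(t) = (c/(c+t))·(s(t) − x(t)), where for each t ≥ 0 the point s(t) is an LMO output at x(t). Then for all t ≥ 0, f(x(t)) − f(x*) ≤ (f(x(0)) − f(x*)) · c^c/(c+t)^c. -/
open RealInnerProductSpace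

lemma gradient_ineq {n : ℕ} (f : EuclideanSpace ℝ (Fin n) → ℝ)
    (hfconv : ConvexOn ℝ Set.univ f) (hfdiff : Differentiable ℝ f)
    (x y : EuclideanSpace ℝ (Fin n)) :
    f x + ⟪gradient f x, y - x⟫ ≤ f y := by
  rcases eq_or_ne y x with rfl | hne
  · simp
  have hgrad : HasFDerivAt f (InnerProductSpace.toDual ℝ _ (gradient f x)) x :=
    hasGradientAt_iff_hasFDerivAt.mp (hfdiff x).hasGradientAt
  set g : ℝ → ℝ := fun θ => f (AffineMap.lineMap x y θ) with hg
  have hgconv : ConvexOn ℝ Set.univ g := by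
    have := hfconv.comp_affineMap (AffineMap.lineMap x y (k := ℝ))
    have h' : ConvexOn ℝ (⇑(AffineMap.lineMap x y (k := ℝ)) ⁻¹' Set.univ) g := this
    simpa [Set.preimage_univ] using h'
  have hline : HasDerivAt (fun θ : ℝ => AffineMap.lineMap x y θ) (y - x) 0 := by
    simp only [AffineMap.lineMap_apply_module]
    have h1 : HasDerivAt (fun θ : ℝ => θ • (y - x) + x) ((1:ℝ) • (y - x)) 0 :=
      ((hasDerivAt_id (0:ℝ)).smul_const (y - x)).add_const x
    have h2 : (fun θ : ℝ => θ • (y - x) + x) = fun θ : ℝ => (1 - θ) • x + θ • y := by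
      funext θ; simp [smul_sub, sub_smul]; abel
    rw [← h2]; simpa using h1
  have hgd : HasDerivAt g ⟪gradient f x, y - x⟫ 0 := by
    have hgrad' : HasFDerivAt f (InnerProductSpace.toDual ℝ _ (gradient f x))
        (AffineMap.lineMap x y (0:ℝ)) := by simpa using hgrad
    have := hgrad'.comp_hasDerivAt 0 hline
    have h' : HasDerivAt g _ 0 := this
    simpa using h'
  have hslope := hgconv.le_slope_of_hasDerivAt (Set.mem_univ (0:ℝ)) (Set.mem_univ (1:ℝ))
    one_pos hgd
  rw [slope_def_field] at hslope
  have hg0 : g 0 = f x := by simp [hg]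
  have hg1 : g 1 = f y := by simp [hg]
  rw [hg0, hg1] at hslope
  rw [show (1:ℝ) - 0 = 1 by norm_num, div_one] at hslope
  linarith

/-- `s` is an output of the linear minimization oracle for `f` over `D` at `x`. -/
def IsLMO {n : ℕ} (D : Set (EuclideanSpace ℝ (Fin n)))
    (f : EuclideanSpace ℝ (Fin n) → ℝ) (x s : EuclideanSpace ℝ (Fin n)) : Prop :=
  s ∈ D ∧ ∀ v ∈ D, ⟪gradient f x, s⟫ ≤ ⟪gradient f x, v⟫

theorem frank_wolfe_flow_rate {n : ℕ} (D : Set (EuclideanSpace ℝ (Fin n)))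
    (hDne : D.Nonempty) (hDcp : IsCompact D) (hDcv : Convex ℝ D)
    (f : EuclideanSpace ℝ (Fin n) → ℝ)
    (hfconv : ConvexOn ℝ Set.univ f) (hfdiff : Differentiable ℝ f)
    (xstar : EuclideanSpace ℝ (Fin n)) (hxstar : xstar ∈ D)
    (hmin : ∀ v ∈ D, f xstar ≤ f v)
    (c : ℝ) (hc : 0 < c)
    (x s : ℝ → EuclideanSpace ℝ (Fin n))
    (hxD : ∀ t ≥ (0:ℝ), x t ∈ D)
    (hsLMO : ∀ t ≥ (0:ℝ), IsLMO D f (x t) (s t))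
    (hflow : ∀ t ≥ (0:ℝ), HasDerivAt x ((c / (c + t)) • (s t - x t)) t) :
    ∀ t ≥ (0:ℝ), f (x t) - f xstar ≤ (f (x 0) - f xstar) * (c ^ c / (c + t) ^ c) := by
  intro t ht
  set g : ℝ → ℝ := fun u => (f (x u) - f xstar) * (c + u) ^ c with hgdef
  -- derivative of g on Ici 0
  have key : ∀ u ∈ Set.Ici (0:ℝ), ∃ d ≤ 0, HasDerivAt g d u := by
    intro u hu
    have hu0 : (0:ℝ) ≤ u := hu
    have hcu : 0 < c + u := by linarith
    have hgrad : HasFDerivAt f (InnerProductSpace.toDual ℝ _ (gradient f (x u))) (x u) :=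
      hasGradientAt_iff_hasFDerivAt.mp (hfdiff (x u)).hasGradientAt
    have hh : HasDerivAt (fun v => f (x v) - f xstar)
        ⟪gradient f (x u), (c / (c + u)) • (s u - x u)⟫ u := by
      have := hgrad.comp_hasDerivAt u (hflow u hu0)
      simpa only [InnerProductSpace.toDual_apply_apply, Function.comp] using this.sub_const (f xstar)
    have hp : HasDerivAt (fun v : ℝ => (c + v) ^ c) (1 * c * (c + u) ^ (c - 1)) u :=
      HasDerivAt.rpow_const ((hasDerivAt_id u).const_add c) (Or.inl (ne_of_gt hcu))
    have hgd : HasDerivAt g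
        (⟪gradient f (x u), (c / (c + u)) • (s u - x u)⟫ * (c + u) ^ c
          + (f (x u) - f xstar) * (1 * c * (c + u) ^ (c - 1))) u := hh.mul hp
    refine ⟨_, ?_, hgd⟩
    -- derivative bound
    have hLMO := hsLMO u hu0
    have hinner : ⟪gradient f (x u), s u - x u⟫ ≤ f xstar - f (x u) := by
      have h1 : ⟪gradient f (x u), s u⟫ ≤ ⟪gradient f (x u), xstar⟫ := hLMO.2 xstar hxstar
      have h2 := gradient_ineq f hfconv hfdiff (x u) xstar
      rw [inner_sub_right] at h2 ⊢
      linarith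
    have hγ : 0 < c / (c + u) := div_pos hc hcu
    have hgpow : (0:ℝ) < (c + u) ^ c := Real.rpow_pos_of_pos hcu c
    have hsplit : (c + u) ^ c = (c + u) ^ (c - 1) * (c + u) := by
      rw [← Real.rpow_add_one (ne_of_gt hcu)]; ring_nf
    have hpow1 : (0:ℝ) < (c + u) ^ (c - 1) := Real.rpow_pos_of_pos hcu _
    have hi' : ⟪gradient f (x u), (c / (c + u)) • (s u - x u)⟫
        ≤ (c / (c + u)) * (f xstar - f (x u)) := by
      rw [real_inner_smul_right]
      exact mul_le_mul_of_nonneg_left hinner (le_of_lt hγ)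
    have hstep : ⟪gradient f (x u), (c / (c + u)) • (s u - x u)⟫ * (c + u) ^ c
        ≤ (f xstar - f (x u)) * (c * (c + u) ^ (c - 1)) := by
      calc ⟪gradient f (x u), (c / (c + u)) • (s u - x u)⟫ * (c + u) ^ c
          ≤ (c / (c + u)) * (f xstar - f (x u)) * (c + u) ^ c :=
            mul_le_mul_of_nonneg_right hi' (le_of_lt hgpow)
        _ = (f xstar - f (x u)) * (c * (c + u) ^ (c - 1)) := by
            rw [hsplit]; field_simp
    nlinarith [hstep]
  have hanti : AntitoneOn g (Set.Ici (0:ℝ)) := by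
    apply antitoneOn_of_deriv_nonpos (convex_Ici 0)
    · intro u hu
      obtain ⟨d, _, hd⟩ := key u hu
      exact hd.continuousAt.continuousWithinAt
    · intro u hu
      rw [interior_Ici] at hu
      obtain ⟨d, _, hd⟩ := key u (Set.mem_Ici.mpr (le_of_lt hu))
      exact hd.differentiableAt.differentiableWithinAt
    · intro u hu
      rw [interior_Ici] at hu
      obtain ⟨d, hd0, hd⟩ := key u (Set.mem_Ici.mpr (le_of_lt hu))
      rw [hd.deriv]; exact hd0
  have hg := hanti (Set.self_mem_Ici) ht ht
  have hg0 : g 0 = (f (x 0) - f xstar) * c ^ c := by simp [hgdef]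
  have hgt : g t = (f (x t) - f xstar) * (c + t) ^ c := rfl
  rw [hg0, hgt] at hg
  have hpos : (0:ℝ) < (c + t) ^ c := Real.rpow_pos_of_pos (by linarith) c
  have heq : f (x t) - f xstar = ((f (x t) - f xstar) * (c + t) ^ c) / (c + t) ^ c := by
    field_simp
  rw [heq, ← mul_div_assoc]
  exact (div_le_div_iff_of_pos_right hpos).mpr hg
end

section
/- Let 𝒟 ⊆ ℝ^n be a nonempty compact convex set with ‖v‖ ≤ D for all v ∈ 𝒟, let f : ℝ^n → ℝ be convex and differentiable with L-Lipschitz gradient, and let x* minimize f over 𝒟. If x ∈ 𝒟, s is an LMO output at x, γ ∈ [0,1], and x⁺ = x + γ(s − x), then f(x⁺) − f(x*) ≤ (1 − γ)(f(x) − f(x*)) + 2·L·D²·γ². -/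
open RealInnerProductSpace

section aux
variable {n : ℕ}

lemma grad_hasDerivAt (f : EuclideanSpace ℝ (Fin n) → ℝ) (hfdiff : Differentiable ℝ f)
    (x d : EuclideanSpace ℝ (Fin n)) (t : ℝ) :
    HasDerivAt (fun t : ℝ => f (x + t • d)) ⟪gradient f (x + t • d), d⟫ t := by
  have hc : HasDerivAt (fun t : ℝ => x + t • d) d t := by
    simpa using ((hasDerivAt_id t).smul_const d).const_add x
  have hf : HasFDerivAt f (InnerProductSpace.toDual ℝ _ (gradient f (x + t • d))) (x + t • d) :=
    (hfdiff (x + t • d)).hasGradientAt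
  have h := hf.comp_hasDerivAt t hc
  simp only [InnerProductSpace.toDual_apply_apply] at h
  exact h

lemma descent_lemma (f : EuclideanSpace ℝ (Fin n) → ℝ) (hfdiff : Differentiable ℝ f)
    (L : ℝ) (hL : 0 ≤ L)
    (hsmooth : ∀ u v, ‖gradient f u - gradient f v‖ ≤ L * ‖u - v‖)
    (x d : EuclideanSpace ℝ (Fin n)) :
    f (x + d) ≤ f x + ⟪gradient f x, d⟫ + L / 2 * ‖d‖ ^ 2 := by
  set ψ : ℝ → ℝ := fun t => f (x + t • d) - t * ⟪gradient f x, d⟫ - L / 2 * ‖d‖ ^ 2 * t ^ 2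
    with hψ
  have hder : ∀ t : ℝ, HasDerivAt ψ
      (⟪gradient f (x + t • d), d⟫ - ⟪gradient f x, d⟫ - L * ‖d‖ ^ 2 * t) t := by
    intro t
    have h1 := grad_hasDerivAt f hfdiff x d t
    have h2 : HasDerivAt (fun t : ℝ => t * ⟪gradient f x, d⟫) ⟪gradient f x, d⟫ t := by
      simpa using (hasDerivAt_id t).mul_const _
    have h3 : HasDerivAt (fun t : ℝ => L / 2 * ‖d‖ ^ 2 * t ^ 2) (L / 2 * ‖d‖ ^ 2 * (2 * t)) t := by
      simpa using (hasDerivAt_pow 2 t).const_mul (L / 2 * ‖d‖ ^ 2)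
    have := (h1.sub h2).sub h3
    convert this using 1
    · rfl
    · rfl
    · rfl
    ring
  have hmono : AntitoneOn ψ (Set.Icc 0 1) := by
    apply antitoneOn_of_deriv_nonpos (convex_Icc 0 1)
    · exact (Continuous.continuousOn (by
        have : ∀ t, DifferentiableAt ℝ ψ t := fun t => (hder t).differentiableAt
        exact (Differentiable.continuous this)))
    · intro t _; exact (hder t).differentiableAt.differentiableWithinAt
    · intro t ht
      rw [interior_Icc] at ht
      rw [(hder t).deriv]
      have hb : ⟪gradient f (x + t • d) - gradient f x, d⟫ ≤ L * ‖d‖ ^ 2 * t := by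
        calc ⟪gradient f (x + t • d) - gradient f x, d⟫
            ≤ ‖gradient f (x + t • d) - gradient f x‖ * ‖d‖ := real_inner_le_norm _ _
          _ ≤ (L * ‖x + t • d - x‖) * ‖d‖ := by
              gcongr; exact hsmooth _ _
          _ = L * ‖d‖ ^ 2 * t := by
              have : ‖x + t • d - x‖ = t * ‖d‖ := by
                simp [norm_smul, abs_of_nonneg ht.1.le]
              rw [this]; ring
      have := inner_sub_left (𝕜 := ℝ) (gradient f (x + t • d)) (gradient f x) d
      rw [this] at hb
      linarith
  have h01 := hmono (Set.mem_Icc.mpr ⟨le_refl 0, zero_le_one⟩)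
      (Set.mem_Icc.mpr ⟨zero_le_one, le_refl 1⟩) zero_le_one
  simp only [hψ, one_smul, zero_smul, add_zero, one_pow, one_mul, zero_mul, sub_zero,
    mul_zero, ne_eq, OfNat.ofNat_ne_zero] at h01
  linarith

lemma convex_grad_le (f : EuclideanSpace ℝ (Fin n) → ℝ)
    (hfconv : ConvexOn ℝ Set.univ f) (hfdiff : Differentiable ℝ f)
    (x v : EuclideanSpace ℝ (Fin n)) :
    ⟪gradient f x, v - x⟫ ≤ f v - f x := by
  set φ : ℝ → ℝ := fun t => f (x + t • (v - x)) with hφ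
  have hconv : ConvexOn ℝ Set.univ φ := by
    have := hfconv.comp_affineMap
      (AffineMap.lineMap x v : ℝ →ᵃ[ℝ] EuclideanSpace ℝ (Fin n))
    simp only [AffineMap.coe_lineMap] at this
    convert this.subset (Set.subset_univ _) convex_univ using 1
    · rfl
    · rfl
    · rfl
    · rfl
    ext t
    simp [hφ, AffineMap.lineMap_apply]
    congr 1
    rw [smul_sub]
    abel
  have hd := grad_hasDerivAt f hfdiff x (v - x) 0
  simp only [zero_smul, add_zero] at hd
  have := hconv.le_slope_of_hasDerivAt (Set.mem_univ (0:ℝ)) (Set.mem_univ (1:ℝ))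
    zero_lt_one hd
  rw [slope_def_field] at this
  simp only [hφ, zero_smul, add_zero, one_smul] at this
  have hx1 : x + (v - x) = v := by abel
  rw [hx1] at this
  simpa using this

end aux

theorem fw_one_step_descent {n : ℕ} (D : Set (EuclideanSpace ℝ (Fin n)))
    (hDne : D.Nonempty) (hDcp : IsCompact D) (hDcv : Convex ℝ D)
    (Db : ℝ) (hDb : ∀ v ∈ D, ‖v‖ ≤ Db)
    (f : EuclideanSpace ℝ (Fin n) → ℝ)
    (hfconv : ConvexOn ℝ Set.univ f) (hfdiff : Differentiable ℝ f)
    (L : ℝ) (hL : 0 ≤ L)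
    (hsmooth : ∀ u v, ‖gradient f u - gradient f v‖ ≤ L * ‖u - v‖)
    (xstar : EuclideanSpace ℝ (Fin n)) (hxstar : xstar ∈ D)
    (hmin : ∀ v ∈ D, f xstar ≤ f v)
    (x s : EuclideanSpace ℝ (Fin n)) (hx : x ∈ D) (hs : IsLMO D f x s)
    (γ : ℝ) (hγ0 : 0 ≤ γ) (hγ1 : γ ≤ 1)
    (xplus : EuclideanSpace ℝ (Fin n)) (hxplus : xplus = x + γ • (s - x)) :
    f xplus - f xstar ≤ (1 - γ) * (f x - f xstar) + 2 * L * Db ^ 2 * γ ^ 2 := by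

  obtain ⟨hsD, hlmo⟩ := hs
  -- descent
  have hdesc : f xplus ≤ f x + ⟪gradient f x, γ • (s - x)⟫ + L / 2 * ‖γ • (s - x)‖ ^ 2 := by
    rw [hxplus]
    exact descent_lemma f hfdiff L hL hsmooth x (γ • (s - x))
  rw [real_inner_smul_right] at hdesc
  -- LMO + convexity
  have h1 : ⟪gradient f x, s - x⟫ ≤ f xstar - f x := by
    calc ⟪gradient f x, s - x⟫ = ⟪gradient f x, s⟫ - ⟪gradient f x, x⟫ := inner_sub_right _ _ _
      _ ≤ ⟪gradient f x, xstar⟫ - ⟪gradient f x, x⟫ := by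
          have := hlmo xstar hxstar; linarith
      _ = ⟪gradient f x, xstar - x⟫ := (inner_sub_right _ _ _).symm
      _ ≤ f xstar - f x := convex_grad_le f hfconv hfdiff x xstar
  -- norm bound
  have hDb0 : 0 ≤ Db := le_trans (norm_nonneg x) (hDb x hx)
  have hsx : ‖s - x‖ ≤ 2 * Db := by
    calc ‖s - x‖ ≤ ‖s‖ + ‖x‖ := norm_sub_le _ _
      _ ≤ 2 * Db := by have := hDb s hsD; have := hDb x hx; linarith
  have hnorm : ‖γ • (s - x)‖ ^ 2 ≤ (2 * Db) ^ 2 * γ ^ 2 := by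
    rw [norm_smul, Real.norm_eq_abs, abs_of_nonneg hγ0]
    have h2 : γ * ‖s - x‖ ≤ γ * (2 * Db) := by
      exact mul_le_mul_of_nonneg_left hsx hγ0
    calc (γ * ‖s - x‖) ^ 2 ≤ (γ * (2 * Db)) ^ 2 := by
          apply pow_le_pow_left₀ (by positivity) h2
      _ = (2 * Db) ^ 2 * γ ^ 2 := by ring
  have hstep : L / 2 * ‖γ • (s - x)‖ ^ 2 ≤ 2 * L * Db ^ 2 * γ ^ 2 := by
    calc L / 2 * ‖γ • (s - x)‖ ^ 2 ≤ L / 2 * ((2 * Db) ^ 2 * γ ^ 2) := by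
          apply mul_le_mul_of_nonneg_left hnorm (by positivity)
      _ = 2 * L * Db ^ 2 * γ ^ 2 := by ring
  have hgsx : γ * ⟪gradient f x, s - x⟫ ≤ γ * (f xstar - f x) :=
    mul_le_mul_of_nonneg_left h1 hγ0
  nlinarith [hdesc, hstep, hgsx]
end

section
/- Let q ≥ 1, let A ∈ ℝ^{q×q}, let Γ = diag(γ̃_1,…,γ̃_q) with γ̃_i > 0, and suppose I + AᵀΓ is invertible. Let β ∈ ℝ^q with Σ_{i=1}^q β_i = 1, let x, s̄_1, …, s̄_q ∈ ℝ^n, and suppose ξ_1, …, ξ_q ∈ ℝ^n satisfy ξ_i = γ̃_i·(s̄_i − x − Σ_{j=1}^q A_{ij} ξ_j) for each i. Set z = q·Γ(I + AᵀΓ)^{-1}β ∈ ℝ^q. Then x + Σ_{i=1}^q β_i ξ_i = (1/q)·Σ_{i=1}^q ((1 − z_i)·x + z_i·s̄_i). In particular, if 0 ≤ z_i ≤ 1 for all i, x ∈ 𝒟, and s̄_1, …, s̄_q ∈ 𝒟 for a convex set 𝒟 ⊆ ℝ^n, then x + Σ_{i=1}^q β_i ξ_i ∈ 𝒟. -/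
open Matrix

theorem rk_step_convex_combination {n q : ℕ} (hq : 1 ≤ q)
    (A : Matrix (Fin q) (Fin q) ℝ)
    (γ : Fin q → ℝ) (hγ : ∀ i, 0 < γ i)
    (hinv : IsUnit (1 + Aᵀ * Matrix.diagonal γ))
    (β : Fin q → ℝ) (hβ : ∑ i, β i = 1)
    (x : EuclideanSpace ℝ (Fin n)) (sb : Fin q → EuclideanSpace ℝ (Fin n))
    (ξ : Fin q → EuclideanSpace ℝ (Fin n))
    (hξ : ∀ i, ξ i = γ i • (sb i - x - ∑ j, A i j • ξ j))
    (z : Fin q → ℝ)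
    (hz : z = (q : ℝ) • (Matrix.diagonal γ * (1 + Aᵀ * Matrix.diagonal γ)⁻¹).mulVec β) :
    (x + ∑ i, β i • ξ i = ((q : ℝ)⁻¹) • ∑ i, ((1 - z i) • x + z i • sb i)) ∧
      (∀ D : Set (EuclideanSpace ℝ (Fin n)), Convex ℝ D →
        (∀ i, 0 ≤ z i ∧ z i ≤ 1) → x ∈ D → (∀ i, sb i ∈ D) →
        x + ∑ i, β i • ξ i ∈ D) := by
  have hq0 : (q : ℝ) ≠ 0 := by positivity
  set Γ := Matrix.diagonal γ with hΓ
  set B := 1 + Aᵀ * Γ with hBdef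
  set C := (1 : Matrix (Fin q) (Fin q) ℝ) + Γ * A with hCdef
  have hCT : Cᵀ = B := by
    simp [hCdef, hBdef, Matrix.transpose_add, Matrix.transpose_mul, hΓ]
  have hCunit : IsUnit C.det := by
    have : IsUnit B.det := (Matrix.isUnit_iff_isUnit_det B).mp hinv
    rw [← hCT, Matrix.det_transpose] at this
    exact this
  -- the weight vector
  set w : Fin q → ℝ := B⁻¹.mulVec β with hw
  have hzw : ∀ i, z i = (q : ℝ) * (γ i * w i) := by
    intro i
    rw [hz]
    simp only [Pi.smul_apply, smul_eq_mul]
    rw [← Matrix.mulVec_mulVec, Matrix.mulVec_diagonal]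
  -- key coordinatewise identity
  have main : ∀ k, ∑ i, β i * ξ i k =
      ∑ i, ((q : ℝ)⁻¹ * z i) * (sb i k - x k) := by
    intro k
    set u : Fin q → ℝ := fun i => ξ i k with hu
    set v : Fin q → ℝ := fun i => γ i * (sb i k - x k) with hv
    have hsys : C.mulVec u = v := by
      funext i
      have := congrArg (fun y : EuclideanSpace ℝ (Fin n) => y k) (hξ i)
      simp only [PiLp.smul_apply, PiLp.sub_apply, smul_eq_mul] at this
      have hsum : (∑ j, A i j • ξ j) k = ∑ j, A i j * ξ j k := by
        rw [WithLp.ofLp_sum, Finset.sum_apply]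
        simp [PiLp.smul_apply]
      rw [hsum] at this
      simp only [Matrix.mulVec, dotProduct, hCdef, Matrix.add_apply,
        Matrix.one_apply, Matrix.mul_apply, hΓ, Matrix.diagonal_apply]
      simp only [hu, hv]
      have hdiag : ∀ j : Fin q, (∑ l, (if i = l then γ i else 0) * A l j) = γ i * A i j := by
        intro j
        rw [Finset.sum_eq_single i]
        · simp
        · intro b _ hb; simp [Ne.symm hb]
        · simp
      simp only [hdiag]
      have hsplit : ∑ j, ((if i = j then 1 else 0) + γ i * A i j) * ξ j k
          = ξ i k + γ i * ∑ j, A i j * ξ j k := by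
        simp [add_mul, Finset.sum_add_distrib, ite_mul, one_mul, zero_mul,
          Finset.sum_ite_eq, Finset.mul_sum, mul_assoc]
      rw [hsplit, this]
      ring
    have huv : u = C⁻¹.mulVec v := by
      rw [← hsys, Matrix.mulVec_mulVec, Matrix.nonsing_inv_mul _ hCunit,
        Matrix.one_mulVec]
    have hdot : β ⬝ᵥ u = w ⬝ᵥ v := by
      rw [huv, Matrix.dotProduct_mulVec, hw, ← Matrix.mulVec_transpose,
        Matrix.transpose_nonsing_inv, hCT]
    have : ∑ i, β i * u i = ∑ i, w i * v i := hdot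
    rw [this]
    refine Finset.sum_congr rfl (fun i _ => ?_)
    rw [hzw i, hv]
    field_simp
  have part1 : x + ∑ i, β i • ξ i = ((q : ℝ)⁻¹) • ∑ i, ((1 - z i) • x + z i • sb i) := by
    apply PiLp.ext
    intro k
    have hL : (x + ∑ i, β i • ξ i) k = x k + ∑ i, β i * ξ i k := by
      rw [PiLp.add_apply, WithLp.ofLp_sum, Finset.sum_apply]
      simp [PiLp.smul_apply]
    have hR : (((q : ℝ)⁻¹) • ∑ i, ((1 - z i) • x + z i • sb i)) k
        = (q : ℝ)⁻¹ * ∑ i, ((1 - z i) * x k + z i * sb i k) := by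
      rw [PiLp.smul_apply, WithLp.ofLp_sum, Finset.sum_apply]
      simp [PiLp.add_apply, PiLp.smul_apply]
    rw [hL, hR, main k]
    rw [Finset.mul_sum]
    rw [Finset.sum_congr rfl (fun i _ => by ring_nf :
      ∀ i ∈ Finset.univ, (q : ℝ)⁻¹ * ((1 - z i) * x k + z i * sb i k)
        = (q : ℝ)⁻¹ * x k + ((q : ℝ)⁻¹ * z i) * (sb i k - x k))]
    rw [Finset.sum_add_distrib, Finset.sum_const, Finset.card_univ, Fintype.card_fin,
      nsmul_eq_mul, ← mul_assoc, mul_inv_cancel₀ hq0, one_mul]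
  refine ⟨part1, ?_⟩
  intro D hD hzb hx hsb
  rw [part1, Finset.smul_sum]
  refine hD.sum_mem (fun i _ => by positivity) ?_ (fun i _ => ?_)
  · simp [hq0]
  · exact hD hx (hsb i) (by linarith [(hzb i).2]) (hzb i).1 (by ring)
end

section
/- Let 𝒟 ⊆ ℝ^n be a nonempty compact convex set, f : ℝ^n → ℝ differentiable, c > 0, q ≥ 1, A ∈ ℝ^{q×q} strictly lower triangular, β ∈ ℝ^q with Σ_i β_i = 1, and ω ∈ ℝ^q with ω_i ≥ 0. The q-stage multistep Frank–Wolfe method generates, from x_0, the iterates x_{k+1} = x_k + Σ_{i=1}^q β_i ξ_i^{(k)}, where for i = 1,…,q sequentially: x̄_i = x_k + Σ_{j<i} A_{ij} ξ_j^{(k)}, s̄_i is an LMO output at x̄_i, and ξ_i^{(k)} = γ̄_i^{(k)}·(s̄_i − x̄_i) with γ̄_i^{(k)} = c/(c+k+ω_i). For each k, set Γ^{(k)} = diag(γ̄_1^{(k)},…,γ̄_q^{(k)}), P^{(k)} = Γ^{(k)}(I + AᵀΓ^{(k)})^{-1}, and z^{(k)} = q·P^{(k)}β. If 0 ≤ z_i^{(k)}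 ≤ 1 for every k ≥ 0 and every i, then x_0 ∈ 𝒟 implies x_k ∈ 𝒟 for all k ≥ 0. -/
open Matrix RealInnerProductSpace

lemma esum_apply {n : ℕ} {ι : Type*} (s : Finset ι)
    (v : ι → EuclideanSpace ℝ (Fin n)) (t : Fin n) :
    (∑ i ∈ s, v i) t = ∑ i ∈ s, v i t := by
  classical
  induction s using Finset.induction_on with
  | empty => rfl
  | insert a s h ih => rw [Finset.sum_insert h, Finset.sum_insert h, PiLp.add_apply, ih]

theorem multistep_fw_feasibility {n q : ℕ} (hq : 1 ≤ q)
    (D : Set (EuclideanSpace ℝ (Fin n)))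
    (hDne : D.Nonempty) (hDcp : IsCompact D) (hDcv : Convex ℝ D)
    (f : EuclideanSpace ℝ (Fin n) → ℝ) (hfdiff : Differentiable ℝ f)
    (c : ℝ) (hc : 0 < c)
    (A : Matrix (Fin q) (Fin q) ℝ) (hA : ∀ i j : Fin q, (i : ℕ) ≤ (j : ℕ) → A i j = 0)
    (β : Fin q → ℝ) (hβ : ∑ i, β i = 1)
    (ω : Fin q → ℝ) (hω : ∀ i, 0 ≤ ω i)
    (x : ℕ → EuclideanSpace ℝ (Fin n))
    (xb sb ξ : ℕ → Fin q → EuclideanSpace ℝ (Fin n))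
    (hxb : ∀ k i, xb k i = x k +
      ∑ j ∈ Finset.univ.filter (fun j : Fin q => (j : ℕ) < (i : ℕ)), A i j • ξ k j)
    (hsb : ∀ k i, IsLMO D f (xb k i) (sb k i))
    (hξ : ∀ k i, ξ k i = (c / (c + (k : ℝ) + ω i)) • (sb k i - xb k i))
    (hx : ∀ k, x (k + 1) = x k + ∑ i, β i • ξ k i)
    (hz : ∀ k : ℕ, ∀ i : Fin q,
      0 ≤ ((q : ℝ) • ((Matrix.diagonal fun i => c / (c + (k : ℝ) + ω i)) *
        (1 + Aᵀ * Matrix.diagonal fun i => c / (c + (k : ℝ) + ω i))⁻¹).mulVec β) i ∧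
      ((q : ℝ) • ((Matrix.diagonal fun i => c / (c + (k : ℝ) + ω i)) *
        (1 + Aᵀ * Matrix.diagonal fun i => c / (c + (k : ℝ) + ω i))⁻¹).mulVec β) i ≤ 1)
    (hx0 : x 0 ∈ D) :
    ∀ k, x k ∈ D := by
  have hq0 : (0 : ℝ) < (q : ℝ) := by exact_mod_cast Nat.lt_of_lt_of_le Nat.zero_lt_one hq
  intro k
  induction k with
  | zero => exact hx0
  | succ k ih =>
    -- notation for the current step
    set γ : Fin q → ℝ := fun i => c / (c + (k : ℝ) + ω i) with hγdef
    set Γd : Matrix (Fin q) (Fin q) ℝ := Matrix.diagonal γ with hΓdef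
    set M : Matrix (Fin q) (Fin q) ℝ := 1 + Aᵀ * Γd with hMdef
    set N : Matrix (Fin q) (Fin q) ℝ := 1 + Γd * A with hNdef
    have hNT : Nᵀ = M := by
      simp [hNdef, hMdef, Matrix.transpose_add, Matrix.transpose_mul, hΓdef,
        Matrix.diagonal_transpose]
    -- M is upper triangular with unit diagonal
    have hMtri : M.BlockTriangular id := by
      intro i j hij
      have hAji : A j i = 0 := hA j i (le_of_lt hij)
      have hne : i ≠ j := by
        intro h; exact absurd h (by rintro rfl; exact lt_irrefl _ hij)
      simp [hMdef, Matrix.add_apply, Matrix.one_apply, hΓdef, Matrix.mul_diagonal,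
        Matrix.transpose_apply, hAji, hne]
    have hMdet : M.det = 1 := by
      rw [Matrix.det_of_upperTriangular hMtri]
      have : ∀ i : Fin q, M i i = 1 := by
        intro i
        simp [hMdef, Matrix.add_apply, Matrix.one_apply, hΓdef, Matrix.mul_diagonal,
          Matrix.transpose_apply, hA i i le_rfl]
      simp [this]
    have hMunit : IsUnit M.det := by rw [hMdet]; exact isUnit_one
    have hNdet : N.det = 1 := by
      rw [← Matrix.det_transpose, hNT, hMdet]
    have hNunit : IsUnit N.det := by rw [hNdet]; exact isUnit_one
    -- the vector z
    set z : Fin q → ℝ := fun i => (q : ℝ) * ((Γd * M⁻¹).mulVec β) i with hzdef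
    have hz' : ∀ i, 0 ≤ z i ∧ z i ≤ 1 := by
      intro i
      have h := hz k i
      simpa [hzdef, hΓdef, hMdef, hγdef, Pi.smul_apply, smul_eq_mul] using h
    -- coordinatewise identity
    have key : ∀ t : Fin n, x (k + 1) t =
        (1 - ∑ i, z i / (q : ℝ)) * x k t + ∑ i, (z i / (q : ℝ)) * sb k i t := by
      intro t
      set u : Fin q → ℝ := fun i => ξ k i t with hudef
      set w : Fin q → ℝ := fun i => sb k i t - x k t with hwdef
      have hu : N.mulVec u = Γd.mulVec w := by
        funext i
        have hxbt : xb k i t = x k t +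
            ∑ j ∈ Finset.univ.filter (fun j : Fin q => (j : ℕ) < (i : ℕ)), A i j * u j := by
          rw [hxb k i, PiLp.add_apply, esum_apply]
          simp [PiLp.smul_apply, smul_eq_mul, hudef]
        have hui : u i = γ i * (w i -
            ∑ j ∈ Finset.univ.filter (fun j : Fin q => (j : ℕ) < (i : ℕ)), A i j * u j) := by
          have := congrArg (fun v : EuclideanSpace ℝ (Fin n) => v t) (hξ k i)
          simp only [PiLp.smul_apply, PiLp.sub_apply, smul_eq_mul] at this
          rw [hudef]
          simp only [this, hxbt, hwdef, hγdef]
          ring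
        have hsum : ∑ j, A i j * u j =
            ∑ j ∈ Finset.univ.filter (fun j : Fin q => (j : ℕ) < (i : ℕ)), A i j * u j := by
          refine (Finset.sum_filter_of_ne ?_).symm
          intro j _ hne
          by_contra hlt
          exact hne (by rw [hA i j (le_of_not_gt hlt), zero_mul])
        have hGA : (Γd * A).mulVec u i = γ i * ∑ j, A i j * u j := by
          simp [Matrix.mulVec, dotProduct, hΓdef, Matrix.diagonal_mul,
            Finset.mul_sum, mul_assoc]
        have hN : N.mulVec u i = u i + γ i * ∑ j, A i j * u j := by
          have h0 : N.mulVec u = u + (Γd * A).mulVec u := by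
            rw [hNdef, Matrix.add_mulVec, Matrix.one_mulVec]
          rw [h0, Pi.add_apply, hGA]
        rw [hN, hsum, hui, Matrix.mulVec_diagonal]
        ring
      have huv : u = (N⁻¹ * Γd).mulVec w := by
        have h1 : N⁻¹.mulVec (N.mulVec u) = N⁻¹.mulVec (Γd.mulVec w) := by rw [hu]
        rwa [Matrix.mulVec_mulVec, Matrix.mulVec_mulVec, Matrix.nonsing_inv_mul N hNunit,
          Matrix.one_mulVec] at h1
      have htransp : (N⁻¹ * Γd)ᵀ = Γd * M⁻¹ := by
        rw [Matrix.transpose_mul, Matrix.transpose_nonsing_inv, hNT, hΓdef,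
          Matrix.diagonal_transpose]
      have hdot : ∑ i, β i * u i = ∑ i, (z i / (q : ℝ)) * w i := by
        have h1 : β ⬝ᵥ ((N⁻¹ * Γd).mulVec w) = (β ᵥ* (N⁻¹ * Γd)) ⬝ᵥ w :=
          Matrix.dotProduct_mulVec β (N⁻¹ * Γd) w
        have h2 : β ᵥ* (N⁻¹ * Γd) = (Γd * M⁻¹).mulVec β := by
          rw [← htransp, Matrix.mulVec_transpose]
        have h3 : ∀ i, z i / (q : ℝ) = ((Γd * M⁻¹).mulVec β) i := by
          intro i
          rw [hzdef]
          field_simp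
        calc ∑ i, β i * u i = β ⬝ᵥ u := rfl
          _ = (β ᵥ* (N⁻¹ * Γd)) ⬝ᵥ w := by rw [huv]; exact h1
          _ = ((Γd * M⁻¹).mulVec β) ⬝ᵥ w := by rw [h2]
          _ = ∑ i, (z i / (q : ℝ)) * w i := by
              simp only [dotProduct]
              exact Finset.sum_congr rfl fun i _ => by rw [h3 i]
      have hxt : x (k + 1) t = x k t + ∑ i, β i * u i := by
        rw [hx k, PiLp.add_apply, esum_apply]
        simp [PiLp.smul_apply, smul_eq_mul, hudef]
      rw [hxt, hdot]
      simp only [hwdef, mul_sub, Finset.sum_sub_distrib, ← Finset.sum_mul]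
      ring
    -- express the new iterate as a convex combination
    have hS0 : 0 ≤ 1 - ∑ i, z i / (q : ℝ) := by
      have hle : ∑ i, z i / (q : ℝ) ≤ ∑ _i : Fin q, 1 / (q : ℝ) := by
        refine Finset.sum_le_sum fun i _ => ?_
        gcongr
        exact (hz' i).2
      have : (∑ _i : Fin q, 1 / (q : ℝ)) = 1 := by
        rw [Finset.sum_const, Finset.card_univ, Fintype.card_fin, nsmul_eq_mul]
        field_simp
      linarith [hle.trans_eq this]
    have hcomb : x (k + 1) = (1 - ∑ i, z i / (q : ℝ)) • x k
        + ∑ i, (z i / (q : ℝ)) • sb k i := by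
      ext t
      rw [key t, PiLp.add_apply, esum_apply]
      simp [PiLp.smul_apply, smul_eq_mul]
    rw [hcomb]
    -- convex combination over `Option (Fin q)`
    have := hDcv.sum_mem (t := (Finset.univ : Finset (Option (Fin q))))
      (w := fun o => o.elim (1 - ∑ i, z i / (q : ℝ)) (fun i => z i / (q : ℝ)))
      (z := fun o => o.elim (x k) (fun i => sb k i))
      (by
        intro o _
        cases o with
        | none => exact hS0
        | some i => exact div_nonneg (hz' i).1 (le_of_lt hq0))
      (by
        rw [Fintype.sum_option]
        simp)
      (by
        intro o _
        cases o with
        | none => exact ih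
        | some i => exact (hsb k i).1)
    rw [Fintype.sum_option] at this
    simpa using this
end

section
/- Let C₁ > 0 and let (c_k)_{k≥1} be a sequence of nonnegative reals such that for every K there exists k > K with c_k > C₁. Define x_1 = 1 and x_{k+1} = |x_k − c_k/k| for k ≥ 1. Then for every K ≥ 1 there exists k ≥ K with |x_k| ≥ C₁/(2k); that is, there is no index K such that |x_k| < C₁/(2k) for all k ≥ K. -/
theorem abs_iteration_lower_bound (C1 : ℝ) (hC1 : 0 < C1)
    (cs : ℕ → ℝ) (hcs : ∀ k, 0 ≤ cs k)
    (hbig : ∀ K : ℕ, ∃ k > K, cs k > C1)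
    (x : ℕ → ℝ) (hx1 : x 1 = 1)
    (hrec : ∀ k ≥ 1, x (k + 1) = |x k - cs k / (k : ℝ)|) :
    ∀ K ≥ 1, ∃ k ≥ K, |x k| ≥ C1 / (2 * (k : ℝ)) := by
  intro K hK
  obtain ⟨k, hkK, hck⟩ := hbig K
  by_cases h : |x k| ≥ C1 / (2 * (k : ℝ))
  · exact ⟨k, le_of_lt hkK, h⟩
  push_neg at h
  refine ⟨k + 1, by omega, ?_⟩
  have hk1 : (1:ℕ) ≤ k := by omega
  have hkpos : (0:ℝ) < (k : ℝ) := by exact_mod_cast Nat.lt_of_lt_of_le Nat.zero_lt_one hk1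
  rw [hrec k hk1, abs_abs]
  have key : cs k / (k : ℝ) - |x k| ≤ |x k - cs k / (k : ℝ)| := by
    have h2 := abs_sub_abs_le_abs_sub (cs k / (k : ℝ)) (x k)
    rw [abs_of_nonneg (div_nonneg (hcs k) hkpos.le), abs_sub_comm] at h2
    exact h2
  have h3 : C1 / (2 * (k : ℝ)) < cs k / (k : ℝ) - |x k| := by
    have : C1 / (k : ℝ) < cs k / (k : ℝ) := by gcongr
    have heq : C1 / (2 * (k : ℝ)) = C1 / (k : ℝ) - C1 / (2 * (k : ℝ)) := by
      field_simp; ring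
    rw [heq]
    exact sub_lt_sub this h
  have h4 : C1 / (2 * ((k : ℝ) + 1)) ≤ C1 / (2 * (k : ℝ)) := by
    gcongr <;> linarith
  push_cast
  linarith
end

section
/- Consider the scalar toy problem min_{x ∈ [−1,1]} f(x) with LMO output at x given by −sign(x) (any element of {−1,1} is allowed when the argument is 0). Let c > 0, q ≥ 1, A ∈ ℝ^{q×q} strictly lower triangular, β ∈ ℝ^q with Σ_i β_i = 1, ω ∈ ℝ^q with ω_i ≥ 0, and generate iterates from x_0 = 1 by x_{k+1} = x_k + Σ_{i=1}^q β_i ξ_i^{(k)}, where sequentially x̄_i = x_k + Σ_{j<i} A_{ij} ξ_j^{(k)}, s_i ∈ {−1,1} with s_i = −sign(x̄_i) whenever x̄_i ≠ 0, and ξ_i^{(k)} = (c/(c+k+ω_i))·(s_i − x̄_i). Assume: (a) 0 < z_i^{(k)} < 1 for all k and i, where z^{(k)} = q·Γ^{(k)}(I + AᵀΓ^{(k)})^{-1}β and Γ^{(k)} = diag(c/(c+k+ω_i)); and (b) β is not cancellable, i.e., for every partition S₁ ∪ S₂ = {1,…,q} one has Σ_{i∈S₁} β_i − Σ_{j∈S₂}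 β_j ≠ 0. Then there exists ε > 0 such that for every K ≥ 1 there exists k ≥ K with |x_k| ≥ ε/k. -/
set_option maxHeartbeats 2000000

open Matrix


lemma multistep_delta_pos' {q : ℕ} (β : Fin q → ℝ)
    (hnc : ∀ S : Finset (Fin q), ∑ i ∈ S, β i - ∑ i ∈ Sᶜ, β i ≠ 0) :
    ∃ δ > 0, ∀ s : Fin q → ℝ, (∀ i, s i = -1 ∨ s i = 1) → δ ≤ |∑ i, β i * s i| := by
  classical
  set F : Finset (Fin q) → ℝ := fun S => |∑ i ∈ S, β i - ∑ i ∈ Sᶜ, β i| with hF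
  refine ⟨Finset.univ.inf' Finset.univ_nonempty F, ?_, ?_⟩
  · rw [gt_iff_lt, Finset.lt_inf'_iff]
    intro S _
    exact abs_pos.mpr (hnc S)
  · intro s hsv
    set S := Finset.univ.filter (fun i => s i = 1) with hS
    have hcompl : Sᶜ = Finset.univ.filter (fun i => ¬ s i = 1) := by
      rw [hS, Finset.compl_filter]
    have h1 : ∑ i ∈ S, β i * s i = ∑ i ∈ S, β i :=
      Finset.sum_congr rfl (fun i hi => by
        have := (Finset.mem_filter.1 (hS ▸ hi)).2
        rw [this, mul_one])
    have h2 : ∑ i ∈ Sᶜ, β i * s i = -∑ i ∈ Sᶜ, β i := by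
      rw [← Finset.sum_neg_distrib]
      refine Finset.sum_congr rfl (fun i hi => ?_)
      have hi' : ¬ s i = 1 := by
        rw [hcompl] at hi; exact (Finset.mem_filter.1 hi).2
      rcases hsv i with h | h
      · rw [h]; ring
      · exact absurd h hi'
    have heq : ∑ i, β i * s i = ∑ i ∈ S, β i - ∑ i ∈ Sᶜ, β i := by
      rw [← Finset.sum_add_sum_compl S (fun i => β i * s i), h1, h2]
      ring
    rw [heq]
    exact Finset.inf'_le _ (Finset.mem_univ S)


lemma multistep_xb_bound' {q : ℕ} (c κ : ℝ) (hc : 0 < c) (hκ : 0 ≤ κ)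
    (A : Matrix (Fin q) (Fin q) ℝ) (ω : Fin q → ℝ) (hω : ∀ i, 0 ≤ ω i)
    (x : ℝ) (hx1 : |x| ≤ 1) (xb s ξ : Fin q → ℝ)
    (hxb : ∀ i, xb i = x +
      ∑ j ∈ Finset.univ.filter (fun j : Fin q => (j : ℕ) < (i : ℕ)), A i j * ξ j)
    (hs : ∀ i, s i = -1 ∨ s i = 1)
    (hξ : ∀ i, ξ i = (c / (c + κ + ω i)) * (s i - xb i)) :
    (∀ i, |xb i| ≤ (2 + ∑ i, ∑ j, |A i j|) * (1 + ∑ i, ∑ j, |A i j|) ^ q) ∧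
    (∀ i, |xb i - x| ≤ (c / (c + κ)) *
      ((∑ i, ∑ j, |A i j|) *
        (1 + (2 + ∑ i, ∑ j, |A i j|) * (1 + ∑ i, ∑ j, |A i j|) ^ q))) := by
  classical
  set T : ℝ := ∑ i, ∑ j, |A i j| with hT
  have hT0 : 0 ≤ T := Finset.sum_nonneg fun i _ =>
    Finset.sum_nonneg fun j _ => abs_nonneg _
  have hrowT : ∀ i : Fin q, ∑ j ∈ Finset.univ.filter
      (fun j : Fin q => (j : ℕ) < (i : ℕ)), |A i j| ≤ T := by
    intro i
    calc ∑ j ∈ Finset.univ.filter (fun j : Fin q => (j : ℕ) < (i : ℕ)), |A i j|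
        ≤ ∑ j, |A i j| := Finset.sum_le_sum_of_subset_of_nonneg
          (Finset.filter_subset _ _) (fun j _ _ => abs_nonneg _)
      _ ≤ T := Finset.single_le_sum (f := fun i => ∑ j, |A i j|)
          (fun i _ => Finset.sum_nonneg fun j _ => abs_nonneg _) (Finset.mem_univ i)
  have hd : ∀ i : Fin q, 0 < c + κ + ω i := fun i => by
    have := hω i; linarith
  have hγ1 : ∀ i : Fin q, c / (c + κ + ω i) ≤ 1 := fun i =>
    (div_le_one (hd i)).2 (by have := hω i; linarith)
  have hγg : ∀ i : Fin q, c / (c + κ + ω i) ≤ c / (c + κ) := fun i =>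
    div_le_div_of_nonneg_left (le_of_lt hc) (by linarith) (by have := hω i; linarith)
  have hξb : ∀ j, |ξ j| ≤ (c / (c + κ + ω j)) * (1 + |xb j|) := by
    intro j
    rw [hξ j, abs_mul, abs_of_pos (div_pos hc (hd j))]
    have : |s j - xb j| ≤ 1 + |xb j| := by
      rcases hs j with h | h <;>
        · rw [h]
          calc |_ - xb j| ≤ |(_ : ℝ)| + |xb j| := abs_sub _ _
            _ ≤ 1 + |xb j| := by norm_num
    exact mul_le_mul_of_nonneg_left this (le_of_lt (div_pos hc (hd j)))
  have hξb' : ∀ j, |ξ j| ≤ 1 + |xb j| := by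
    intro j
    refine (hξb j).trans ?_
    have h1 : (0:ℝ) ≤ 1 + |xb j| := by positivity
    nlinarith [hγ1 j, div_pos hc (hd j)]
  -- main induction
  have key : ∀ n : ℕ, ∀ i : Fin q, (i : ℕ) ≤ n → |xb i| ≤ (2 + T) * (1 + T) ^ n := by
    intro n
    induction n with
    | zero =>
      intro i hi
      have hsum : ∑ j ∈ Finset.univ.filter (fun j : Fin q => (j : ℕ) < (i : ℕ)),
          A i j * ξ j = 0 := Finset.sum_eq_zero fun j hj => by
        have := (Finset.mem_filter.1 hj).2
        omega
      rw [hxb i, hsum, add_zero, pow_zero, mul_one]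
      linarith
    | succ n ih =>
      intro i hi
      have h1 : (1 : ℝ) ≤ (1 + T) ^ n := one_le_pow₀ (by linarith)
      have hCn : (1 : ℝ) + T ≤ (2 + T) * (1 + T) ^ n := by nlinarith
      have hterm : ∀ j ∈ Finset.univ.filter (fun j : Fin q => (j : ℕ) < (i : ℕ)),
          |A i j * ξ j| ≤ |A i j| * (1 + (2 + T) * (1 + T) ^ n) := by
        intro j hj
        rw [abs_mul]
        have hj' : (j : ℕ) ≤ n := by
          have := (Finset.mem_filter.1 hj).2
          omega
        have hxbj := ih j hj'
        have hξj : |ξ j| ≤ 1 + (2 + T) * (1 + T) ^ n := (hξb' j).trans (by linarith)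
        exact mul_le_mul_of_nonneg_left hξj (abs_nonneg _)
      have hstep : |xb i| ≤ 1 + T * (1 + (2 + T) * (1 + T) ^ n) := by
        rw [hxb i]
        calc |x + ∑ j ∈ Finset.univ.filter (fun j : Fin q => (j : ℕ) < (i : ℕ)), A i j * ξ j|
            ≤ |x| + |∑ j ∈ Finset.univ.filter (fun j : Fin q => (j : ℕ) < (i : ℕ)), A i j * ξ j| :=
              abs_add_le _ _
          _ ≤ 1 + ∑ j ∈ Finset.univ.filter (fun j : Fin q => (j : ℕ) < (i : ℕ)), |A i j * ξ j| :=
              add_le_add hx1 (Finset.abs_sum_le_sum_abs _ _)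
          _ ≤ 1 + ∑ j ∈ Finset.univ.filter (fun j : Fin q => (j : ℕ) < (i : ℕ)),
                |A i j| * (1 + (2 + T) * (1 + T) ^ n) :=
              add_le_add_right (Finset.sum_le_sum hterm) 1
          _ ≤ 1 + T * (1 + (2 + T) * (1 + T) ^ n) := by
              rw [← Finset.sum_mul]
              have hpos : (0:ℝ) ≤ 1 + (2 + T) * (1 + T) ^ n := by nlinarith
              exact add_le_add_right (mul_le_mul_of_nonneg_right (hrowT i) hpos) 1
      calc |xb i| ≤ 1 + T * (1 + (2 + T) * (1 + T) ^ n) := hstep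
        _ ≤ (2 + T) * (1 + T) ^ (n + 1) := by
            rw [pow_succ]
            nlinarith [hCn]
  have keyq : ∀ i : Fin q, |xb i| ≤ (2 + T) * (1 + T) ^ q := fun i =>
    key q i (le_of_lt i.isLt)
  have hpowq : (1 : ℝ) ≤ (1 + T) ^ q := one_le_pow₀ (by linarith)
  have hM0 : (0:ℝ) ≤ (2 + T) * (1 + T) ^ q := by nlinarith
  refine ⟨keyq, fun i => ?_⟩
  have hg0 : 0 < c / (c + κ) := div_pos hc (by linarith)
  rw [hxb i, add_sub_cancel_left]
  have hterm : ∀ j ∈ Finset.univ.filter (fun j : Fin q => (j : ℕ) < (i : ℕ)),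
      |A i j * ξ j| ≤ |A i j| * ((c / (c + κ)) * (1 + (2 + T) * (1 + T) ^ q)) := by
    intro j hj
    rw [abs_mul]
    refine mul_le_mul_of_nonneg_left ?_ (abs_nonneg _)
    calc |ξ j| ≤ (c / (c + κ + ω j)) * (1 + |xb j|) := hξb j
      _ ≤ (c / (c + κ)) * (1 + (2 + T) * (1 + T) ^ q) := by
          have h1 : (0:ℝ) ≤ 1 + |xb j| := by positivity
          have h2 := keyq j
          have h3 := hγg j
          have h4 : 0 < c / (c + κ + ω j) := div_pos hc (hd j)
          nlinarith
  calc |∑ j ∈ Finset.univ.filter (fun j : Fin q => (j : ℕ) < (i : ℕ)), A i j * ξ j|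
      ≤ ∑ j ∈ Finset.univ.filter (fun j : Fin q => (j : ℕ) < (i : ℕ)), |A i j * ξ j| :=
        Finset.abs_sum_le_sum_abs _ _
    _ ≤ ∑ j ∈ Finset.univ.filter (fun j : Fin q => (j : ℕ) < (i : ℕ)),
          |A i j| * ((c / (c + κ)) * (1 + (2 + T) * (1 + T) ^ q)) :=
        Finset.sum_le_sum hterm
    _ ≤ (c / (c + κ)) * (T * (1 + (2 + T) * (1 + T) ^ q)) := by
        rw [← Finset.sum_mul]
        have hpos : (0:ℝ) ≤ (c / (c + κ)) * (1 + (2 + T) * (1 + T) ^ q) := by nlinarith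
        calc _ ≤ T * ((c / (c + κ)) * (1 + (2 + T) * (1 + T) ^ q)) :=
              mul_le_mul_of_nonneg_right (hrowT i) hpos
          _ = _ := by ring

theorem multistep_fw_toy_lower_bound {q : ℕ} (hq : 1 ≤ q)
    (c : ℝ) (hc : 0 < c)
    (A : Matrix (Fin q) (Fin q) ℝ) (hA : ∀ i j : Fin q, (i : ℕ) ≤ (j : ℕ) → A i j = 0)
    (β : Fin q → ℝ) (hβ : ∑ i, β i = 1)
    (ω : Fin q → ℝ) (hω : ∀ i, 0 ≤ ω i)
    (x : ℕ → ℝ) (xb s ξ : ℕ → Fin q → ℝ)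
    (hx0 : x 0 = 1)
    (hxb : ∀ k i, xb k i = x k +
      ∑ j ∈ Finset.univ.filter (fun j : Fin q => (j : ℕ) < (i : ℕ)), A i j * ξ k j)
    (hs : ∀ k i, s k i = -1 ∨ s k i = 1)
    (hssign : ∀ k i, xb k i ≠ 0 → s k i = -Real.sign (xb k i))
    (hξ : ∀ k i, ξ k i = (c / (c + (k : ℝ) + ω i)) * (s k i - xb k i))
    (hx : ∀ k, x (k + 1) = x k + ∑ i, β i * ξ k i)
    (hz : ∀ k : ℕ, ∀ i : Fin q,
      0 < ((q : ℝ) • ((Matrix.diagonal fun i => c / (c + (k : ℝ) + ω i)) *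
        (1 + Aᵀ * Matrix.diagonal fun i => c / (c + (k : ℝ) + ω i))⁻¹).mulVec β) i ∧
      ((q : ℝ) • ((Matrix.diagonal fun i => c / (c + (k : ℝ) + ω i)) *
        (1 + Aᵀ * Matrix.diagonal fun i => c / (c + (k : ℝ) + ω i))⁻¹).mulVec β) i < 1)
    (hnc : ∀ S : Finset (Fin q), ∑ i ∈ S, β i - ∑ i ∈ Sᶜ, β i ≠ 0) :
    ∃ ε > 0, ∀ K : ℕ, 1 ≤ K → ∃ k ≥ K, |x k| ≥ ε / (k : ℝ) := by
  classical
  obtain ⟨δ, hδ0, hδ⟩ := multistep_delta_pos' β hnc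
  clear hz hssign hx0 hA hnc hq hβ
  set T : ℝ := ∑ i, ∑ j, |A i j| with hTdef
  set B : ℝ := ∑ i, |β i| with hBdef
  set M : ℝ := (2 + T) * (1 + T) ^ q with hMdef
  set D : ℝ := ∑ i, |β i| * ω i with hDdef
  set C4 : ℝ := D / c + B * (T * (1 + M)) with hC4def
  have hT0 : 0 ≤ T := Finset.sum_nonneg fun i _ =>
    Finset.sum_nonneg fun j _ => abs_nonneg _
  have hB0 : 0 ≤ B := Finset.sum_nonneg fun i _ => abs_nonneg _
  have hD0 : 0 ≤ D := Finset.sum_nonneg fun i _ =>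
    mul_nonneg (abs_nonneg _) (hω i)
  have hpowq : (1 : ℝ) ≤ (1 + T) ^ q := one_le_pow₀ (by linarith)
  have hM0 : 0 ≤ M := by rw [hMdef]; nlinarith
  have hC40 : 0 ≤ C4 := by
    rw [hC4def]
    have h1 : 0 ≤ D / c := div_nonneg hD0 hc.le
    have h2 : 0 ≤ B * (T * (1 + M)) := mul_nonneg hB0 (mul_nonneg hT0 (by linarith))
    linarith
  have h1B : (0:ℝ) < 1 + B := by linarith
  set ε : ℝ := min (δ * c / (8 * (1 + B))) 1 with hεdef
  have hε0 : 0 < ε := lt_min (div_pos (mul_pos hδ0 hc) (by linarith)) one_pos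
  have hε1 : ε ≤ 1 := min_le_right _ _
  have hεle : ε ≤ δ * c / (8 * (1 + B)) := min_le_left _ _
  have hε8 : 8 * ε ≤ δ * c := by
    have h := mul_le_mul_of_nonneg_left hεle (le_of_lt h1B)
    have he : (1 + B) * (δ * c / (8 * (1 + B))) = δ * c / 8 := by
      field_simp
    rw [he] at h
    linarith only [h, mul_nonneg hB0 hε0.le]
  -- main step lemma
  have hmain : ∀ k : ℕ, c ≤ (k : ℝ) → 4 * c * C4 ≤ δ * (k : ℝ) → 1 ≤ k →
      |x k| < ε / (k : ℝ) → ε / ((k : ℝ) + 1) ≤ |x (k + 1)| := by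
    intro k hkc hkC hk1 hxk
    have hk1' : (1 : ℝ) ≤ (k : ℝ) := by exact_mod_cast hk1
    have hk0 : (0 : ℝ) < (k : ℝ) := by linarith
    have hxk1 : |x k| ≤ 1 := by
      have : ε / (k : ℝ) ≤ ε := div_le_self hε0.le hk1'
      linarith
    obtain ⟨hxbM, hxbnear⟩ := multistep_xb_bound' c (k : ℝ) hc (Nat.cast_nonneg k)
      A ω hω (x k) hxk1 (xb k) (s k) (ξ k) (hxb k) (hs k) (hξ k)
    set g : ℝ := c / (c + (k : ℝ)) with hgdef
    have hck : (0 : ℝ) < c + (k : ℝ) := by linarith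
    have hg0 : 0 < g := div_pos hc hck
    have hg1 : g ≤ 1 := (div_le_one hck).2 (by linarith)
    have hg2 : c / (2 * (k : ℝ)) ≤ g :=
      div_le_div_of_nonneg_left hc.le hck (by linarith)
    have hgk : g ≤ c / (k : ℝ) :=
      div_le_div_of_nonneg_left hc.le hk0 (by linarith)
    have hgC : g * C4 ≤ δ / 4 := by
      have h1 : g * C4 ≤ (c / (k : ℝ)) * C4 := mul_le_mul_of_nonneg_right hgk hC40
      have h2 : (c / (k : ℝ)) * C4 ≤ δ / 4 := by
        rw [div_mul_eq_mul_div, div_le_div_iff₀ hk0 (by norm_num : (0:ℝ) < 4)]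
        linarith only [hkC]
      linarith
    -- per-coordinate gamma facts
    have hd2 : ∀ i : Fin q, (0 : ℝ) < c + (k : ℝ) + ω i := fun i => by
      have := hω i; linarith
    have hγg : ∀ i : Fin q, c / (c + (k : ℝ) + ω i) ≤ g := fun i =>
      div_le_div_of_nonneg_left hc.le hck (by have := hω i; linarith)
    have hγ0 : ∀ i : Fin q, 0 < c / (c + (k : ℝ) + ω i) := fun i =>
      div_pos hc (hd2 i)
    have hkey : ∀ i : Fin q, g - c / (c + (k : ℝ) + ω i) ≤ g ^ 2 * ω i / c := by
      intro i
      have hωi := hω i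
      have e1 : g - c / (c + (k : ℝ) + ω i) =
          c * ω i / ((c + (k : ℝ)) * (c + (k : ℝ) + ω i)) := by
        rw [hgdef]
        field_simp
        ring
      have e2 : g ^ 2 * ω i / c = c * ω i / ((c + (k : ℝ)) * (c + (k : ℝ))) := by
        rw [hgdef]
        field_simp
      rw [e1, e2]
      exact div_le_div_of_nonneg_left (mul_nonneg hc.le hωi)
        (by positivity) (mul_le_mul_of_nonneg_left (by linarith) hck.le)
    have habs_s : ∀ i, |s k i| = 1 := fun i => by
      rcases hs k i with h | h <;> rw [h] <;> norm_num
    -- decomposition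
    set P : ℝ := ∑ i, β i * (c / (c + (k : ℝ) + ω i)) * s k i with hPdef
    set Q : ℝ := x k - ∑ i, β i * (c / (c + (k : ℝ) + ω i)) * xb k i with hQdef
    have hdecomp : x (k + 1) = Q + P := by
      rw [hx k]
      have hterm : ∀ i ∈ Finset.univ, β i * ξ k i =
          β i * (c / (c + (k : ℝ) + ω i)) * s k i -
          β i * (c / (c + (k : ℝ) + ω i)) * xb k i := fun i _ => by
        rw [hξ k i]; ring
      rw [Finset.sum_congr rfl hterm, Finset.sum_sub_distrib, hQdef, hPdef]
      ring
    set S1 : ℝ := ∑ i, β i * s k i with hS1def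
    have hS1 : δ ≤ |S1| := hδ (s k) (hs k)
    set R : ℝ := ∑ i, β i * s k i * (g - c / (c + (k : ℝ) + ω i)) with hRdef
    have hPeq : P = g * S1 - R := by
      rw [hPdef, hS1def, hRdef, Finset.mul_sum, ← Finset.sum_sub_distrib]
      exact Finset.sum_congr rfl fun i _ => by ring
    have hRb : |R| ≤ g ^ 2 * D / c := by
      have hsum : ∑ i, |β i| * (g ^ 2 * ω i / c) = g ^ 2 * D / c := by
        rw [hDdef, Finset.mul_sum, Finset.sum_div]
        exact Finset.sum_congr rfl fun i _ => by ring
      calc |R| ≤ ∑ i, |β i * s k i * (g - c / (c + (k : ℝ) + ω i))| := by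
            rw [hRdef]; exact Finset.abs_sum_le_sum_abs _ _
        _ ≤ ∑ i, |β i| * (g ^ 2 * ω i / c) := by
            refine Finset.sum_le_sum fun i _ => ?_
            rw [abs_mul, abs_mul, habs_s i, mul_one]
            refine mul_le_mul_of_nonneg_left ?_ (abs_nonneg _)
            rw [abs_of_nonneg (sub_nonneg.2 (hγg i))]
            exact hkey i
        _ = g ^ 2 * D / c := hsum
    have hPb : g * δ - g ^ 2 * D / c ≤ |P| := by
      have h0 : g * S1 = P + R := by rw [hPeq]; ring
      have h1 : |g * S1| ≤ |P| + |R| := by rw [h0]; exact abs_add_le _ _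
      have h2 : g * δ ≤ |g * S1| := by
        rw [abs_mul, abs_of_pos hg0]
        exact mul_le_mul_of_nonneg_left hS1 hg0.le
      linarith only [h1, h2, hRb]
    have hQb : |Q| ≤ |x k| + B * (g * (|x k| + g * (T * (1 + M)))) := by
      have hsum : ∑ i, |β i| * (g * (|x k| + g * (T * (1 + M)))) =
          B * (g * (|x k| + g * (T * (1 + M)))) :=
        (Finset.sum_mul _ _ _).symm
      calc |Q| ≤ |x k| + |∑ i, β i * (c / (c + (k : ℝ) + ω i)) * xb k i| := by
            rw [hQdef]; exact abs_sub _ _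
        _ ≤ |x k| + ∑ i, |β i * (c / (c + (k : ℝ) + ω i)) * xb k i| :=
            add_le_add_right (Finset.abs_sum_le_sum_abs _ _) _
        _ ≤ |x k| + ∑ i, |β i| * (g * (|x k| + g * (T * (1 + M)))) := by
            refine add_le_add_right (Finset.sum_le_sum fun i _ => ?_) _
            rw [abs_mul, abs_mul, abs_of_pos (hγ0 i)]
            rw [mul_assoc]
            refine mul_le_mul_of_nonneg_left ?_ (abs_nonneg _)
            have h1 : |xb k i| ≤ |x k| + g * (T * (1 + M)) := by
              have h2 := hxbnear i
              have h3 : |xb k i| ≤ |xb k i - x k| + |x k| := by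
                calc |xb k i| = |(xb k i - x k) + x k| := by ring_nf
                  _ ≤ |xb k i - x k| + |x k| := abs_add_le _ _
              rw [← hTdef, ← hMdef] at h2
              linarith
            have h4 := hγg i
            have h5 := hγ0 i
            have h6 : 0 ≤ |x k| + g * (T * (1 + M)) := by positivity
            exact le_trans (mul_le_mul_of_nonneg_left h1 h5.le)
              (mul_le_mul_of_nonneg_right h4 h6)
        _ = |x k| + B * (g * (|x k| + g * (T * (1 + M)))) := by rw [hsum]
    -- final assembly
    have habsP : |P| - |Q| ≤ |x (k + 1)| := by
      have h0 : P = x (k + 1) - Q := by rw [hdecomp]; ring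
      have h1 : |P| ≤ |x (k + 1)| + |Q| := by rw [h0]; exact abs_sub _ _
      linarith
    have e1 : g ^ 2 * D / c + B * (g * (g * (T * (1 + M)))) = g * (g * C4) := by
      rw [hC4def]
      ring
    have e2 : g * (g * C4) ≤ g * (δ / 4) := mul_le_mul_of_nonneg_left hgC hg0.le
    have e3 : |x k| + B * (g * |x k|) ≤ (1 + B) * (ε / (k : ℝ)) := by
      have hBg : B * (g * |x k|) ≤ B * |x k| := by
        have hg' : g * |x k| ≤ 1 * |x k| := mul_le_mul_of_nonneg_right hg1 (abs_nonneg _)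
        rw [one_mul] at hg'
        exact mul_le_mul_of_nonneg_left hg' hB0
      have hBx : B * |x k| ≤ B * (ε / (k : ℝ)) := mul_le_mul_of_nonneg_left hxk.le hB0
      have hexp : (1 + B) * (ε / (k : ℝ)) = ε / (k : ℝ) + B * (ε / (k : ℝ)) := by ring
      linarith only [hBg, hBx, hxk, hexp]
    have e4 : (1 + B) * (ε / (k : ℝ)) ≤ δ * c / (8 * (k : ℝ)) := by
      rw [mul_div_assoc', div_le_div_iff₀ hk0 (by positivity)]
      have h := mul_le_mul_of_nonneg_left hεle (le_of_lt h1B)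
      have he : (1 + B) * (δ * c / (8 * (1 + B))) = δ * c / 8 := by
        field_simp
      rw [he] at h
      have h2 := mul_le_mul_of_nonneg_right h (by positivity : (0:ℝ) ≤ 8 * (k : ℝ))
      have he2 : δ * c / 8 * (8 * (k : ℝ)) = δ * c * (k : ℝ) := by ring
      linarith only [h2, he2]
    have e5 : δ * c / (8 * (k : ℝ)) ≤ g * (δ / 4) := by
      have h1 : (c / (2 * (k : ℝ))) * (δ / 4) ≤ g * (δ / 4) :=
        mul_le_mul_of_nonneg_right hg2 (by linarith)
      have h2 : δ * c / (8 * (k : ℝ)) = (c / (2 * (k : ℝ))) * (δ / 4) := by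
        rw [div_mul_div_comm]
        ring_nf
      linarith [h2 ▸ h1]
    have e6 : ε / ((k : ℝ) + 1) ≤ δ * c / (4 * (k : ℝ)) := by
      rw [div_le_div_iff₀ (by linarith) (by positivity)]
      have h1 := mul_le_mul_of_nonneg_right hε8 hk0.le
      have h2 : 0 ≤ δ * c := (mul_pos hδ0 hc).le
      have h3 : 0 ≤ δ * c * (k : ℝ) := mul_nonneg h2 hk0.le
      linarith only [h1, h2, h3]
    have e7 : δ * c / (4 * (k : ℝ)) ≤ g * δ / 2 := by
      have h1 : (c / (2 * (k : ℝ))) * δ ≤ g * δ :=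
        mul_le_mul_of_nonneg_right hg2 hδ0.le
      have h2 : δ * c / (4 * (k : ℝ)) = ((c / (2 * (k : ℝ))) * δ) / 2 := by
        rw [div_mul_eq_mul_div, div_div]
        ring_nf
      rw [h2]
      linarith
    have hQexp : B * (g * (|x k| + g * (T * (1 + M)))) =
        B * (g * |x k|) + B * (g * (g * (T * (1 + M)))) := by ring
    have er : g * (δ / 4) = g * δ / 4 := by ring
    linarith only [habsP, hPb, hQb, e1, e2, e3, e4, e5, e6, e7, hQexp, er]
  -- conclusion
  refine ⟨ε, hε0, ?_⟩
  intro K hK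
  set N : ℕ := Nat.ceil (max c (4 * c * C4 / δ)) with hNdef
  set k0 : ℕ := max K (max 1 N) with hk0def
  have hk0K : K ≤ k0 := le_max_left _ _
  have hk01 : 1 ≤ k0 := le_trans (le_max_left 1 N) (le_max_right _ _)
  have hk0N : N ≤ k0 := le_trans (le_max_right 1 N) (le_max_right _ _)
  have hcastN : (max c (4 * c * C4 / δ)) ≤ (k0 : ℝ) :=
    (Nat.le_ceil _).trans (by exact_mod_cast hk0N)
  have hkc : c ≤ (k0 : ℝ) := (le_max_left _ _).trans hcastN
  have hkC : 4 * c * C4 ≤ δ * (k0 : ℝ) := by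
    have h := (le_max_right c (4 * c * C4 / δ)).trans hcastN
    rw [div_le_iff₀ hδ0] at h
    linarith
  by_cases hcase : ε / (k0 : ℝ) ≤ |x k0|
  · exact ⟨k0, hk0K, hcase⟩
  · push_neg at hcase
    refine ⟨k0 + 1, le_trans hk0K (Nat.le_succ _), ?_⟩
    have h := hmain k0 hkc hkC hk01 hcase
    rw [ge_iff_le]
    push_cast
    exact h
end

section
/- Let c > 0 be a real number and let i, k be integers with 1 ≤ i ≤ k. Then Π_{j=i}^{k} (j−1)/(c+j−1) ≤ ((i+c)/(k+c))^c. -/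
private lemma key_factor (c x : ℝ) (hc : 0 < c) (hx : 0 < x) :
    (x - c) / x ≤ (x / (x + 1)) ^ c := by
  have hx1 : (0:ℝ) < x + 1 := by linarith
  have hpos : 0 < x / (x + 1) := div_pos hx hx1
  have h2 : 1 - c / x ≤ Real.exp (-(c / x)) := by
    have := Real.add_one_le_exp (-(c / x))
    linarith
  have hlog : Real.log ((x + 1) / x) ≤ 1 / x := by
    have h := Real.log_le_sub_one_of_pos (div_pos hx1 hx)
    have : (x + 1) / x - 1 = 1 / x := by field_simp; ring
    linarith
  have h3 : Real.exp (-(c / x)) ≤ (x / (x + 1)) ^ c := by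
    rw [Real.rpow_def_of_pos hpos]
    apply Real.exp_le_exp.mpr
    have hlogneg : Real.log (x / (x + 1)) = -Real.log ((x + 1) / x) := by
      rw [← Real.log_inv]
      congr 1
      rw [inv_div]
    rw [hlogneg]
    have := mul_le_mul_of_nonneg_left hlog hc.le
    have hxne : x ≠ 0 := hx.ne'
    rw [mul_one_div] at this
    nlinarith
  have h1 : (x - c) / x = 1 - c / x := by field_simp
  linarith

private lemma telescope (c : ℝ) (hc : 0 < c) (i : ℕ) (hi : 1 ≤ i) :
    ∀ k, i ≤ k → ∏ j ∈ Finset.Icc i k, ((c + (j : ℝ) - 1) / (c + (j : ℝ))) =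
      (c + (i : ℝ) - 1) / (c + (k : ℝ)) := by
  intro k
  induction k with
  | zero => intro h; omega
  | succ n ih =>
    intro h
    rcases Nat.lt_or_ge n i with hn | hn
    · have : i = n + 1 := by omega
      subst this
      simp
    · rw [Finset.prod_Icc_succ_top (by omega : i ≤ n + 1), ih hn]
      have h1 : (0:ℝ) < c + n := by positivity
      have h2 : (0:ℝ) < c + (n + 1 : ℕ) := by positivity
      push_cast
      push_cast at h2
      field_simp
      ring

theorem product_step_size_bound (c : ℝ) (hc : 0 < c) (i k : ℕ)
    (hi : 1 ≤ i) (hik : i ≤ k) :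
    ∏ j ∈ Finset.Icc i k, (((j : ℝ) - 1) / (c + (j : ℝ) - 1)) ≤
      (((i : ℝ) + c) / ((k : ℝ) + c)) ^ c := by
  have step1 : ∏ j ∈ Finset.Icc i k, (((j : ℝ) - 1) / (c + (j : ℝ) - 1)) ≤
      ∏ j ∈ Finset.Icc i k, ((c + (j : ℝ) - 1) / (c + (j : ℝ))) ^ c := by
    apply Finset.prod_le_prod
    · intro j hj
      have hj1 : 1 ≤ j := le_trans hi (Finset.mem_Icc.mp hj).1
      have : (1:ℝ) ≤ j := by exact_mod_cast hj1
      apply div_nonneg <;> linarith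
    · intro j hj
      have hj1 : 1 ≤ j := le_trans hi (Finset.mem_Icc.mp hj).1
      have hjr : (1:ℝ) ≤ j := by exact_mod_cast hj1
      have hx : (0:ℝ) < c + (j : ℝ) - 1 := by linarith
      have := key_factor c (c + (j : ℝ) - 1) hc hx
      have e1 : c + (j : ℝ) - 1 - c = (j : ℝ) - 1 := by ring
      have e2 : c + (j : ℝ) - 1 + 1 = c + (j : ℝ) := by ring
      rw [e1, e2] at this
      exact this
  have step2 : ∏ j ∈ Finset.Icc i k, ((c + (j : ℝ) - 1) / (c + (j : ℝ))) ^ c =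
      ((c + (i : ℝ) - 1) / (c + (k : ℝ))) ^ c := by
    rw [Real.finset_prod_rpow _ _ (fun j hj => by
      have hj1 : 1 ≤ j := le_trans hi (Finset.mem_Icc.mp hj).1
      have hjr : (1:ℝ) ≤ j := by exact_mod_cast hj1
      apply div_nonneg <;> linarith)]
    rw [telescope c hc i hi k hik]
  have step3 : ((c + (i : ℝ) - 1) / (c + (k : ℝ))) ^ c ≤
      (((i : ℝ) + c) / ((k : ℝ) + c)) ^ c := by
    apply Real.rpow_le_rpow
    · apply div_nonneg
      · have : (1:ℝ) ≤ i := by exact_mod_cast hi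
        linarith
      · have : (0:ℝ) ≤ k := Nat.cast_nonneg k
        linarith
    · have hir : (1:ℝ) ≤ i := by exact_mod_cast hi
      have hk0 : (0:ℝ) ≤ k := Nat.cast_nonneg k
      apply div_le_div₀ (by linarith) (by linarith) (by linarith) (by linarith)
    · exact hc.le
  calc _ ≤ _ := step1
    _ = _ := step2
    _ ≤ _ := step3
end

section
/- Let c be a positive integer, D > 0, and let β_{k,i} = (c/(c+i))·Π_{j=0}^{k−i−1}(1 − c/(c+k−j)) for 1 ≤ i ≤ k be the averaging weights with p = 1. Let 𝒟 ⊆ ℝ^n satisfy ‖v‖ ≤ D for all v ∈ 𝒟, let K* ⊆ 𝒟 be a convex set, let k̄ ≥ 1, and let (s_i)_{i≥1} and (s̃_i)_{i≥1} be sequences in 𝒟 with s̃_i ∈ K* for all i, and s_i ∈ K* and s̃_i = s_i for all i ≥ k̄. Then there exists a constant C > 0, depending only on D, c, and k̄, such that for all k ≥ k̄: ‖Σ_{i=1}^k β_{k,i}(s_i − s̃_i)‖ ≤ C/k^c. -/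
open Finset

lemma prod_shift (c k : ℕ) :
    (∏ t ∈ Finset.Icc 1 c, (((k:ℝ)+1)+t)) * ((k:ℝ)+1)
      = (∏ t ∈ Finset.Icc 1 c, ((k:ℝ)+t)) * ((k:ℝ)+1+c) := by
  have hB : (∏ t ∈ Finset.Icc 1 c, ((k:ℝ)+t)) = ∏ r ∈ Finset.range c, ((k:ℝ)+1+r) := by
    rw [← Finset.Ico_add_one_right_eq_Icc, Finset.prod_Ico_eq_prod_range]
    exact Finset.prod_congr rfl (fun r _ => by push_cast; ring)
  have hA : (∏ t ∈ Finset.Icc 1 c, (((k:ℝ)+1)+t)) = ∏ r ∈ Finset.range c, ((k:ℝ)+1+((r:ℝ)+1)) := by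
    rw [← Finset.Ico_add_one_right_eq_Icc, Finset.prod_Ico_eq_prod_range]
    exact Finset.prod_congr rfl (fun r _ => by push_cast; ring)
  have h1 := Finset.prod_range_succ (fun r : ℕ => (k:ℝ)+1+r) c
  have h2 := Finset.prod_range_succ' (fun r : ℕ => (k:ℝ)+1+r) c
  rw [hA, hB]
  have e1 : (∏ r ∈ Finset.range c, ((k:ℝ)+1+((r:ℝ)+1))) = ∏ r ∈ Finset.range c, ((k:ℝ)+1+((r+1:ℕ):ℝ)) :=
    Finset.prod_congr rfl (fun r _ => by push_cast; ring)
  rw [e1]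
  have : (∏ r ∈ Finset.range c, ((k:ℝ)+1+((r+1:ℕ):ℝ))) * ((k:ℝ)+1+((0:ℕ):ℝ))
      = (∏ r ∈ Finset.range c, ((k:ℝ)+1+(r:ℝ))) * ((k:ℝ)+1+(c:ℝ)) := by
    rw [← h1, ← h2]
  push_cast at this ⊢
  nlinarith [this]

lemma prod_ratio_eq (c i : ℕ) : ∀ k, i ≤ k →
    ∏ m ∈ Finset.Icc (i+1) k, ((m:ℝ)/((m:ℝ)+c))
      = (∏ t ∈ Finset.Icc 1 c, ((i:ℝ)+t)) / (∏ t ∈ Finset.Icc 1 c, ((k:ℝ)+t)) := by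
  have hposgen : ∀ x : ℝ, 0 ≤ x → 0 < ∏ t ∈ Finset.Icc 1 c, (x+t) := by
    intro x hx
    apply Finset.prod_pos
    intro t ht
    simp only [Finset.mem_Icc] at ht
    have : (0:ℝ) < (t:ℝ) := by exact_mod_cast ht.1
    linarith
  intro k hk
  induction k, hk using Nat.le_induction with
  | base =>
    rw [Finset.Icc_eq_empty (by omega), Finset.prod_empty, div_self]
    exact ne_of_gt (hposgen _ (by positivity))
  | succ k hk ih =>
    rw [Finset.prod_Icc_succ_top (by omega : i+1 ≤ k+1), ih]
    have hB := hposgen (k:ℝ) (by positivity)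
    have heq : (∏ t ∈ Finset.Icc 1 c, (((k+1:ℕ):ℝ)+(t:ℝ))) = ∏ t ∈ Finset.Icc 1 c, (((k:ℝ)+1)+t) :=
      Finset.prod_congr rfl (fun t _ => by push_cast; ring)
    have hA : (0:ℝ) < ∏ t ∈ Finset.Icc 1 c, (((k+1:ℕ):ℝ)+(t:ℝ)) := by
      rw [heq]; exact hposgen ((k:ℝ)+1) (by positivity)
    have hkey := prod_shift c k
    have hcast : (((k+1:ℕ)):ℝ) = (k:ℝ)+1 := by push_cast; ring
    rw [div_mul_div_comm, div_eq_div_iff (by positivity) (ne_of_gt hA), heq, hcast]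
    linear_combination (∏ t ∈ Finset.Icc 1 c, ((i:ℝ)+t)) * hkey

lemma reindex_prod (c k i : ℕ) (hik : i ≤ k) :
    ∏ j ∈ Finset.range (k - i), (1 - (c:ℝ)/((c:ℝ)+(k:ℝ)-(j:ℝ)))
      = ∏ m ∈ Finset.Icc (i+1) k, ((m:ℝ)/((m:ℝ)+c)) := by
  refine Finset.prod_nbij' (fun j => k - j) (fun m => k - m) ?_ ?_ ?_ ?_ ?_
  · intro j hj
    simp only [Finset.mem_range] at hj
    simp only [Finset.mem_Icc]
    omega
  · intro m hm
    simp only [Finset.mem_Icc] at hm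
    simp only [Finset.mem_range]
    omega
  · intro j hj
    simp only [Finset.mem_range] at hj
    show k - (k - j) = j
    omega
  · intro m hm
    simp only [Finset.mem_Icc] at hm
    show k - (k - m) = m
    omega
  · intro j hj
    simp only [Finset.mem_range] at hj
    have h1 : j ≤ k := by omega
    have h2 : ((k - j : ℕ) : ℝ) = (k:ℝ) - (j:ℝ) := by
      rw [Nat.cast_sub h1]
    have h3 : (0:ℝ) < (c:ℝ) + (k:ℝ) - (j:ℝ) := by
      have hjk : (j:ℝ) < (k:ℝ) := by exact_mod_cast (by omega : j < k)
      have hc0 : (0:ℝ) ≤ (c:ℝ) := by positivity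
      linarith
    have hA : (c:ℝ) + (k:ℝ) - (j:ℝ) ≠ 0 := ne_of_gt h3
    show 1 - (c:ℝ)/((c:ℝ)+(k:ℝ)-(j:ℝ)) = ((k - j : ℕ):ℝ)/(((k - j : ℕ):ℝ)+(c:ℝ))
    rw [h2, show ((k:ℝ)-(j:ℝ))+(c:ℝ) = (c:ℝ)+(k:ℝ)-(j:ℝ) from by ring,
      eq_div_iff hA, sub_mul, one_mul, div_mul_cancel₀ _ hA]
    ring

theorem avg_fw_local_averaging_error {n : ℕ} (c : ℕ) (hc : 0 < c)
    (Db : ℝ) (hDb : 0 < Db) (kbar : ℕ) (hkbar : 1 ≤ kbar) :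
    ∃ C > 0, ∀ (D Kstar : Set (EuclideanSpace ℝ (Fin n))),
      (∀ v ∈ D, ‖v‖ ≤ Db) → Kstar ⊆ D → Convex ℝ Kstar →
      ∀ s st : ℕ → EuclideanSpace ℝ (Fin n),
        (∀ i, s i ∈ D) → (∀ i, st i ∈ Kstar) →
        (∀ i ≥ kbar, s i ∈ Kstar ∧ st i = s i) →
        ∀ k ≥ kbar,
          ‖∑ i ∈ Finset.Icc 1 k,
              (((c : ℝ) / ((c : ℝ) + (i : ℝ))) *
                ∏ j ∈ Finset.range (k - i),
                  (1 - (c : ℝ) / ((c : ℝ) + (k : ℝ) - (j : ℝ)))) • (s i - st i)‖ ≤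
            C / (k : ℝ) ^ (c : ℕ) := by
  refine ⟨2 * Db * kbar * ((kbar:ℝ) + c) ^ c, by positivity, ?_⟩
  intro D Kstar hD hKD _hconv s st hsD hstK hlate k hk
  have hk0 : 0 < k := lt_of_lt_of_le hkbar hk
  have hk0' : (0:ℝ) < (k:ℝ) := by exact_mod_cast hk0
  set f : ℕ → EuclideanSpace ℝ (Fin n) := fun i =>
    (((c : ℝ) / ((c : ℝ) + (i : ℝ))) *
      ∏ j ∈ Finset.range (k - i),
        (1 - (c : ℝ) / ((c : ℝ) + (k : ℝ) - (j : ℝ)))) • (s i - st i) with hf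
  have hsub : Finset.Ico 1 kbar ⊆ Finset.Icc 1 k := by
    intro i hi
    simp only [Finset.mem_Ico] at hi
    simp only [Finset.mem_Icc]
    omega
  have hsum : ∑ i ∈ Finset.Icc 1 k, f i = ∑ i ∈ Finset.Ico 1 kbar, f i := by
    refine (Finset.sum_subset hsub ?_).symm
    intro i hi hni
    simp only [Finset.mem_Icc] at hi
    simp only [Finset.mem_Ico] at hni
    have hike : kbar ≤ i := by omega
    have := (hlate i hike).2
    simp [hf, this]
  rw [hsum]
  have hbound : ∀ i ∈ Finset.Ico 1 kbar,
      ‖f i‖ ≤ (((kbar:ℝ) + c) ^ c / (k:ℝ) ^ c) * (2 * Db) := by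
    intro i hi
    simp only [Finset.mem_Ico] at hi
    have hik : i ≤ k := le_trans (le_of_lt hi.2) hk
    have hnorm : ‖s i - st i‖ ≤ 2 * Db := by
      calc ‖s i - st i‖ ≤ ‖s i‖ + ‖st i‖ := norm_sub_le _ _
        _ ≤ Db + Db := add_le_add (hD _ (hsD i)) (hD _ (hKD (hstK i)))
        _ = 2 * Db := by ring
    rw [hf]
    simp only [norm_smul, Real.norm_eq_abs]
    have hprod : ∏ j ∈ Finset.range (k - i), (1 - (c:ℝ)/((c:ℝ)+(k:ℝ)-(j:ℝ)))
        = (∏ t ∈ Finset.Icc 1 c, ((i:ℝ)+t)) / (∏ t ∈ Finset.Icc 1 c, ((k:ℝ)+t)) := by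
      rw [reindex_prod c k i hik, prod_ratio_eq c i k hik]
    have hden : (k:ℝ) ^ c ≤ ∏ t ∈ Finset.Icc 1 c, ((k:ℝ)+t) := by
      have : (k:ℝ) ^ c = ∏ _t ∈ Finset.Icc 1 c, (k:ℝ) := by
        rw [Finset.prod_const, Nat.card_Icc]
        norm_num
      rw [this]
      refine Finset.prod_le_prod (fun t _ => by positivity) (fun t ht => ?_)
      have : (0:ℝ) ≤ (t:ℝ) := by positivity
      linarith
    have hnum : (∏ t ∈ Finset.Icc 1 c, ((i:ℝ)+t)) ≤ ((kbar:ℝ) + c) ^ c := by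
      have h2 : ((kbar:ℝ) + c) ^ c = ∏ _t ∈ Finset.Icc 1 c, ((kbar:ℝ)+c) := by
        rw [Finset.prod_const, Nat.card_Icc]
        norm_num
      rw [h2]
      refine Finset.prod_le_prod (fun t _ => by positivity) (fun t ht => ?_)
      simp only [Finset.mem_Icc] at ht
      have h3 : (i:ℝ) ≤ (kbar:ℝ) := by exact_mod_cast le_of_lt hi.2
      have h4 : (t:ℝ) ≤ (c:ℝ) := by exact_mod_cast ht.2
      linarith
    have hnumpos : (0:ℝ) ≤ ∏ t ∈ Finset.Icc 1 c, ((i:ℝ)+t) := by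
      refine Finset.prod_nonneg (fun t _ => by positivity)
    have hfrac1 : (c:ℝ)/((c:ℝ)+(i:ℝ)) ≤ 1 := by
      rw [div_le_one (by positivity)]
      have : (0:ℝ) ≤ (i:ℝ) := by positivity
      linarith
    have hfrac0 : (0:ℝ) ≤ (c:ℝ)/((c:ℝ)+(i:ℝ)) := by positivity
    have habs : |((c:ℝ)/((c:ℝ)+(i:ℝ))) *
        ∏ j ∈ Finset.range (k - i), (1 - (c:ℝ)/((c:ℝ)+(k:ℝ)-(j:ℝ)))|
        ≤ ((kbar:ℝ) + c) ^ c / (k:ℝ) ^ c := by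
      rw [hprod]
      have hv0 : (0:ℝ) ≤ ((c:ℝ)/((c:ℝ)+(i:ℝ))) *
          ((∏ t ∈ Finset.Icc 1 c, ((i:ℝ)+t)) / (∏ t ∈ Finset.Icc 1 c, ((k:ℝ)+t))) := by
        apply mul_nonneg hfrac0
        apply div_nonneg hnumpos
        exact le_trans (by positivity) hden
      rw [abs_of_nonneg hv0]
      calc ((c:ℝ)/((c:ℝ)+(i:ℝ))) *
          ((∏ t ∈ Finset.Icc 1 c, ((i:ℝ)+t)) / (∏ t ∈ Finset.Icc 1 c, ((k:ℝ)+t)))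
          ≤ 1 * ((∏ t ∈ Finset.Icc 1 c, ((i:ℝ)+t)) / (∏ t ∈ Finset.Icc 1 c, ((k:ℝ)+t))) := by
            apply mul_le_mul_of_nonneg_right hfrac1
            apply div_nonneg hnumpos
            exact le_trans (by positivity) hden
        _ = (∏ t ∈ Finset.Icc 1 c, ((i:ℝ)+t)) / (∏ t ∈ Finset.Icc 1 c, ((k:ℝ)+t)) := one_mul _
        _ ≤ ((kbar:ℝ) + c) ^ c / (k:ℝ) ^ c := by
            apply div_le_div₀ (by positivity) hnum (by positivity) hden
    exact mul_le_mul habs hnorm (norm_nonneg _) (by positivity)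
  calc ‖∑ i ∈ Finset.Ico 1 kbar, f i‖
      ≤ ∑ i ∈ Finset.Ico 1 kbar, ‖f i‖ := norm_sum_le _ _
    _ ≤ ∑ _i ∈ Finset.Ico 1 kbar, (((kbar:ℝ) + c) ^ c / (k:ℝ) ^ c) * (2 * Db) :=
        Finset.sum_le_sum hbound
    _ = (kbar - 1 : ℕ) * ((((kbar:ℝ) + c) ^ c / (k:ℝ) ^ c) * (2 * Db)) := by
        rw [Finset.sum_const, Nat.card_Ico, nsmul_eq_mul]
    _ ≤ (kbar:ℝ) * ((((kbar:ℝ) + c) ^ c / (k:ℝ) ^ c) * (2 * Db)) := by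
        apply mul_le_mul_of_nonneg_right
        · exact_mod_cast Nat.sub_le kbar 1
        · positivity
    _ = 2 * Db * kbar * ((kbar:ℝ) + c) ^ c / (k:ℝ) ^ c := by
        field_simp
end

section
/- Let c > 1, D > 0, and t̄ ≥ 0. Let 𝒟 ⊆ ℝ^n satisfy ‖v‖ ≤ D for all v ∈ 𝒟, let K* ⊆ 𝒟 be a convex set, and let s, s̃ : [0,∞) → 𝒟 be continuous with s̃(τ) ∈ K* for all τ, and s(τ) ∈ K* and s̃(τ) = s(τ) for all τ ≥ t̄. Define β_{t,τ} = c(c+τ)^{c−1}/(c+t)^c, β̄_t = 1 − (c/(c+t))^c, s̄(t) = ∫₀ᵗ β_{t,τ} s(τ) dτ, and ŝ(t) = β̄_t^{−1}·∫₀ᵗ β_{t,τ} s̃(τ) dτ. Then there exist constants C > 0 and T ≥ t̄ such that for all t ≥ T: ‖s̄(t) − ŝ(t)‖ ≤ C/(c+t)^c. -/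
theorem avg_fw_flow_local_averaging_error {n : ℕ} (c : ℝ) (hc : 1 < c)
    (Db : ℝ) (hDb : 0 < Db) (tbar : ℝ) (htbar : 0 ≤ tbar)
    (D Kstar : Set (EuclideanSpace ℝ (Fin n)))
    (hDbd : ∀ v ∈ D, ‖v‖ ≤ Db) (hKD : Kstar ⊆ D) (hKcv : Convex ℝ Kstar)
    (s st : ℝ → EuclideanSpace ℝ (Fin n))
    (hscont : Continuous s) (hstcont : Continuous st)
    (hsD : ∀ τ : ℝ, s τ ∈ D) (hstK : ∀ τ : ℝ, st τ ∈ Kstar)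
    (hident : ∀ τ ≥ tbar, s τ ∈ Kstar ∧ st τ = s τ)
    (sbar shat : ℝ → EuclideanSpace ℝ (Fin n))
    (hsbar : ∀ t : ℝ, sbar t =
      ∫ τ in (0:ℝ)..t, (c * (c + τ) ^ (c - 1) / (c + t) ^ c) • s τ)
    (hshat : ∀ t : ℝ, shat t = (1 - (c / (c + t)) ^ c)⁻¹ •
      ∫ τ in (0:ℝ)..t, (c * (c + τ) ^ (c - 1) / (c + t) ^ c) • st τ) :
    ∃ C > 0, ∃ T ≥ tbar, ∀ t ≥ T, ‖sbar t - shat t‖ ≤ C / (c + t) ^ c := by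
  have hc0 : (0:ℝ) < c := by linarith
  set T : ℝ := tbar + 1 with hTdef
  have hT0 : 0 < T := by linarith
  set b0 : ℝ := 1 - (c / (c + T)) ^ c with hb0def
  have hcT : 0 < c + T := by linarith
  have hfrac : c / (c + T) < 1 := by
    rw [div_lt_one hcT]; linarith
  have hb0 : 0 < b0 := by
    have : (c / (c + T)) ^ c < 1 :=
      Real.rpow_lt_one (by positivity) hfrac hc0
    simp only [hb0def]; linarith
  have hstD : ∀ τ : ℝ, st τ ∈ D := fun τ => hKD (hstK τ)
  set C : ℝ := 2 * Db * c * tbar * (c + tbar) ^ (c - 1) + c ^ c * c * Db / b0 + 1 with hCdef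
  have hC : 0 < C := by
    have h1 : 0 ≤ 2 * Db * c * tbar * (c + tbar) ^ (c - 1) := by positivity
    have h2 : 0 ≤ c ^ c * c * Db / b0 := by positivity
    simp only [hCdef]; linarith
  refine ⟨C, hC, T, by linarith, ?_⟩
  intro t ht
  have htT : tbar + 1 ≤ t := ht
  have hct : 0 < c + t := by linarith
  have hA : 0 < (c + t) ^ c := Real.rpow_pos_of_pos hct c
  -- integrability helper
  have hcontg : ∀ (f : ℝ → EuclideanSpace ℝ (Fin n)), Continuous f →
      Continuous (fun τ => (c * (c + τ) ^ (c - 1) / (c + t) ^ c) • f τ) := by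
    intro f hf
    exact (((continuous_const.mul ((continuous_const.add continuous_id).rpow_const
      (fun x => Or.inr (by linarith)))).div_const _).smul hf)
  set b : ℝ := 1 - (c / (c + t)) ^ c with hbdef
  have hble : (c / (c + t)) ^ c ≤ (c / (c + T)) ^ c := by
    apply Real.rpow_le_rpow (by positivity) _ hc0.le
    apply div_le_div_of_nonneg_left hc0.le hcT
    linarith
  have hbge : b0 ≤ b := by simp only [hbdef, hb0def]; linarith
  have hbpos : 0 < b := lt_of_lt_of_le hb0 hbge
  have hble1 : b ≤ 1 := by
    have : 0 ≤ (c / (c + t)) ^ c := by positivity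
    simp only [hbdef]; linarith
  set I1 : EuclideanSpace ℝ (Fin n) :=
    ∫ τ in (0:ℝ)..t, (c * (c + τ) ^ (c - 1) / (c + t) ^ c) • s τ with hI1
  set I2 : EuclideanSpace ℝ (Fin n) :=
    ∫ τ in (0:ℝ)..t, (c * (c + τ) ^ (c - 1) / (c + t) ^ c) • st τ with hI2
  have hdecomp : sbar t - shat t = (I1 - I2) + (1 - b⁻¹) • I2 := by
    rw [hsbar, hshat, sub_smul, one_smul]
    abel
  -- bound on I1 - I2
  have hsub : I1 - I2 =
      ∫ τ in (0:ℝ)..tbar, (c * (c + τ) ^ (c - 1) / (c + t) ^ c) • (s τ - st τ) := by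
    have hint1 := (hcontg s hscont).intervalIntegrable (μ := MeasureTheory.volume) 0 t
    have hint2 := (hcontg st hstcont).intervalIntegrable (μ := MeasureTheory.volume) 0 t
    rw [hI1, hI2, ← intervalIntegral.integral_sub hint1 hint2]
    have heq : ∀ τ : ℝ, (c * (c + τ) ^ (c - 1) / (c + t) ^ c) • s τ -
        (c * (c + τ) ^ (c - 1) / (c + t) ^ c) • st τ =
        (c * (c + τ) ^ (c - 1) / (c + t) ^ c) • (s τ - st τ) := by
      intro τ; rw [smul_sub]
    simp_rw [heq]
    have hintsub := (hcontg (fun τ => s τ - st τ) (hscont.sub hstcont))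
    rw [← intervalIntegral.integral_add_adjacent_intervals
      (hintsub.intervalIntegrable (μ := MeasureTheory.volume) 0 tbar) (hintsub.intervalIntegrable (μ := MeasureTheory.volume) tbar t)]
    have hzero : (∫ τ in tbar..t, (c * (c + τ) ^ (c - 1) / (c + t) ^ c) • (s τ - st τ)) = 0 := by
      have : Set.EqOn (fun τ => (c * (c + τ) ^ (c - 1) / (c + t) ^ c) • (s τ - st τ))
          (fun _ => (0 : EuclideanSpace ℝ (Fin n))) (Set.uIcc tbar t) := by
        intro τ hτ
        rw [Set.uIcc_of_le (by linarith)] at hτ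
        have := (hident τ hτ.1).2
        simp [this]
      rw [intervalIntegral.integral_congr this]
      simp
    rw [hzero, add_zero]
  have h1 : ‖I1 - I2‖ ≤ 2 * Db * c * tbar * (c + tbar) ^ (c - 1) / (c + t) ^ c := by
    rw [hsub]
    have hbd : ∀ τ ∈ Set.uIoc (0:ℝ) tbar,
        ‖(c * (c + τ) ^ (c - 1) / (c + t) ^ c) • (s τ - st τ)‖ ≤
        c * (c + tbar) ^ (c - 1) / (c + t) ^ c * (2 * Db) := by
      intro τ hτ
      rw [Set.uIoc_of_le htbar] at hτ
      have hτ0 : 0 < τ := hτ.1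
      have hcτ : 0 < c + τ := by linarith
      have hrpow : (c + τ) ^ (c - 1) ≤ (c + tbar) ^ (c - 1) :=
        Real.rpow_le_rpow hcτ.le (by linarith [hτ.2]) (by linarith)
      have hgnn : 0 ≤ c * (c + τ) ^ (c - 1) / (c + t) ^ c := by positivity
      rw [norm_smul, Real.norm_eq_abs, abs_of_nonneg hgnn]
      have hnrm : ‖s τ - st τ‖ ≤ 2 * Db := by
        have := norm_sub_le (s τ) (st τ)
        have h1 := hDbd _ (hsD τ)
        have h2 := hDbd _ (hstD τ)
        linarith
      apply mul_le_mul _ hnrm (norm_nonneg _) (by positivity)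
      apply div_le_div_of_nonneg_right _ hA.le
      · exact mul_le_mul_of_nonneg_left hrpow hc0.le
    calc ‖∫ τ in (0:ℝ)..tbar, (c * (c + τ) ^ (c - 1) / (c + t) ^ c) • (s τ - st τ)‖
        ≤ c * (c + tbar) ^ (c - 1) / (c + t) ^ c * (2 * Db) * |tbar - 0| :=
          intervalIntegral.norm_integral_le_of_norm_le_const hbd
      _ = 2 * Db * c * tbar * (c + tbar) ^ (c - 1) / (c + t) ^ c := by
          rw [sub_zero, abs_of_nonneg htbar]; ring
  -- bound on I2
  have h2 : ‖I2‖ ≤ c * Db := by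
    have hbd : ∀ τ ∈ Set.uIoc (0:ℝ) t,
        ‖(c * (c + τ) ^ (c - 1) / (c + t) ^ c) • st τ‖ ≤ c * Db / (c + t) := by
      intro τ hτ
      rw [Set.uIoc_of_le (by linarith)] at hτ
      have hcτ : 0 < c + τ := by linarith [hτ.1]
      have hgnn : 0 ≤ c * (c + τ) ^ (c - 1) / (c + t) ^ c := by positivity
      rw [norm_smul, Real.norm_eq_abs, abs_of_nonneg hgnn]
      have hrpow : (c + τ) ^ (c - 1) ≤ (c + t) ^ (c - 1) :=
        Real.rpow_le_rpow hcτ.le (by linarith [hτ.2]) (by linarith)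
      have hkey : c * (c + t) ^ (c - 1) / (c + t) ^ c = c / (c + t) := by
        have : (c + t) ^ c = (c + t) ^ (c - 1) * (c + t) := by
          rw [← Real.rpow_add_one hct.ne' (c - 1)]; ring_nf
        rw [this]
        have hp : (0:ℝ) < (c + t) ^ (c - 1) := Real.rpow_pos_of_pos hct _
        field_simp
      calc c * (c + τ) ^ (c - 1) / (c + t) ^ c * ‖st τ‖
          ≤ c * (c + t) ^ (c - 1) / (c + t) ^ c * Db := by
            apply mul_le_mul _ (hDbd _ (hstD τ)) (norm_nonneg _) (by positivity)
            apply div_le_div_of_nonneg_right _ hA.le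
            exact mul_le_mul_of_nonneg_left hrpow hc0.le
        _ = c / (c + t) * Db := by rw [hkey]
        _ = c * Db / (c + t) := by ring
    calc ‖I2‖ ≤ c * Db / (c + t) * |t - 0| :=
          intervalIntegral.norm_integral_le_of_norm_le_const hbd
      _ = c * Db / (c + t) * t := by rw [sub_zero, abs_of_nonneg (by linarith)]
      _ ≤ c * Db / (c + t) * (c + t) := by
          apply mul_le_mul_of_nonneg_left (by linarith) (by positivity)
      _ = c * Db := by field_simp
  -- bound on |1 - b⁻¹|
  have h3 : |1 - b⁻¹| ≤ (c ^ c / (c + t) ^ c) / b0 := by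
    have hbinv : 1 ≤ b⁻¹ := by
      rw [le_inv_comm₀ one_pos hbpos]; simpa using hble1
    rw [abs_of_nonpos (by linarith)]
    have heq : -(1 - b⁻¹) = (c / (c + t)) ^ c / b := by
      field_simp [hbdef]
      linarith
    rw [heq, Real.div_rpow hc0.le hct.le]
    apply div_le_div_of_nonneg_left (by positivity) hb0 hbge
  -- combine
  rw [hdecomp]
  calc ‖(I1 - I2) + (1 - b⁻¹) • I2‖
      ≤ ‖I1 - I2‖ + ‖(1 - b⁻¹) • I2‖ := norm_add_le _ _
    _ = ‖I1 - I2‖ + |1 - b⁻¹| * ‖I2‖ := by rw [norm_smul, Real.norm_eq_abs]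
    _ ≤ 2 * Db * c * tbar * (c + tbar) ^ (c - 1) / (c + t) ^ c +
        ((c ^ c / (c + t) ^ c) / b0) * (c * Db) := by
        apply add_le_add h1
        exact mul_le_mul h3 h2 (norm_nonneg _) (by positivity)
    _ = (2 * Db * c * tbar * (c + tbar) ^ (c - 1) + c ^ c * c * Db / b0) / (c + t) ^ c := by
        field_simp
    _ ≤ C / (c + t) ^ c := by
        apply div_le_div_of_nonneg_right _ hA.le
        simp only [hCdef]; linarith
end

section
/- Let c > 0 and K ≥ 0, and let h : [0,∞) → ℝ be differentiable with h'(t) ≤ K·c/(c+t)^{c+1} − (c/(c+t))·h(t) for all t ≥ 0. Then for all t ≥ 0, h(t) ≤ (h(0)·c^c + K·c·log((c+t)/c))/(c+t)^c. -/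
theorem local_flow_log_bound (c K : ℝ) (hc : 0 < c) (hK : 0 ≤ K)
    (h : ℝ → ℝ) (hdiff : Differentiable ℝ h)
    (hineq : ∀ t ≥ (0:ℝ),
      deriv h t ≤ K * c / (c + t) ^ (c + 1) - (c / (c + t)) * h t) :
    ∀ t ≥ (0:ℝ),
      h t ≤ (h 0 * c ^ c + K * c * Real.log ((c + t) / c)) / (c + t) ^ c := by
  set g : ℝ → ℝ := fun s => h s * (c + s) ^ c - K * c * Real.log (c + s) with hg
  have hgderiv : ∀ s ∈ Set.Ici (0:ℝ), HasDerivAt g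
      (deriv h s * (c + s) ^ c + h s * (1 * c * (c + s) ^ (c - 1))
        - K * c * (1 / (c + s))) s := by
    intro s hs
    have hpos : 0 < c + s := by have := Set.mem_Ici.mp hs; linarith
    have h1 : HasDerivAt (fun x : ℝ => c + x) 1 s := by
      simpa using (hasDerivAt_id s).const_add c
    have h2 : HasDerivAt (fun x : ℝ => (c + x) ^ c) (1 * c * (c + s) ^ (c - 1)) s :=
      h1.rpow_const (Or.inl hpos.ne')
    have h3 := ((hdiff s).hasDerivAt).mul h2
    have h4 : HasDerivAt (fun x : ℝ => Real.log (c + x)) (1 / (c + s)) s := by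
      simpa using h1.log hpos.ne'
    exact h3.sub (h4.const_mul (K * c))
  have hanti : AntitoneOn g (Set.Ici 0) := by
    apply antitoneOn_of_deriv_nonpos (convex_Ici 0)
    · exact fun s hs => (hgderiv s hs).continuousAt.continuousWithinAt
    · intro s hs
      rw [interior_Ici] at hs
      exact (hgderiv s (Set.mem_Ici.mpr (Set.mem_Ioi.mp hs).le)).differentiableAt.differentiableWithinAt
    · intro s hs
      rw [interior_Ici] at hs
      have hs' : (0:ℝ) ≤ s := hs.le
      rw [(hgderiv s hs').deriv]
      have hu : 0 < c + s := by linarith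
      set u := c + s with hu'
      set P := u ^ c with hP'
      have hP : 0 < P := Real.rpow_pos_of_pos hu c
      have hsub : u ^ (c - 1) = P / u := by
        rw [hP', Real.rpow_sub hu, Real.rpow_one]
      have hadd : u ^ (c + 1) = P * u := by
        rw [hP', Real.rpow_add hu, Real.rpow_one]
      have h' := hineq s hs'
      rw [hadd] at h'
      have key : deriv h s * (P * u) ≤ K * c - (c / u * h s) * (P * u) :=
        by
          have := mul_le_mul_of_nonneg_right h' (mul_pos hP hu).le
          rw [sub_mul, div_mul_cancel₀ _ (mul_pos hP hu).ne'] at this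
          linarith
      have e2 : (c / u * h s) * (P * u) = c * h s * P := by
        field_simp
      rw [e2] at key
      rw [hsub]
      have hX : (deriv h s * P + h s * (1 * c * (P / u)) - K * c * (1 / u)) * u
          = deriv h s * (P * u) + c * h s * P - K * c := by
        field_simp
      have hXle : (deriv h s * P + h s * (1 * c * (P / u)) - K * c * (1 / u)) * u
          ≤ 0 * u := by
        rw [hX, zero_mul]; linarith
      exact le_of_mul_le_mul_right hXle hu
  intro t ht
  have hgt := hanti (Set.self_mem_Ici) (Set.mem_Ici.mpr ht) ht
  have hct : 0 < c + t := by linarith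
  have hPt : 0 < (c + t) ^ c := Real.rpow_pos_of_pos hct c
  rw [le_div_iff₀ hPt]
  have hlog : Real.log ((c + t) / c) = Real.log (c + t) - Real.log c :=
    Real.log_div hct.ne' hc.ne'
  have hg0 : g 0 = h 0 * c ^ c - K * c * Real.log c := by
    simp [hg]
  have hgt' : g t = h t * (c + t) ^ c - K * c * Real.log (c + t) := by
    simp [hg]
  rw [hg0, hgt'] at hgt
  rw [hlog]
  linarith
end

section
/- Let c > 1, r ≥ 0, C₀ ≥ 0, C₃ ≥ 0, K₀ ≥ 1, and γ_k = c/(c+k). Let (h_k)_{k≥K₀} be a sequence of nonnegative reals satisfying h_{k+1} ≤ (1 − γ_k)·h_k + C₃/k^{c+1} + C₀/k^{r+2} for all k ≥ K₀. Then there exist constants C₄ > 0 and K ≥ K₀ such that for all k ≥ K: h_k ≤ C₄ · max{ log(k)/(c+k)^c , 1/k^{r+1} }. -/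
open Real

private lemma my_bernoulli {x p : ℝ} (hp : 1 ≤ p) (hx : x ≤ 1) :
    1 - p * x ≤ (1 - x) ^ p := by
  have := one_add_mul_self_le_rpow_one_add (s := -x) (by linarith) hp
  simpa [sub_eq_add_neg, mul_neg] using this

private lemma my_ind (h g : ℕ → ℝ) (K : ℕ) (base : h K ≤ g K)
    (step : ∀ k, K ≤ k → h k ≤ g k → h (k+1) ≤ g (k+1)) :
    ∀ k, K ≤ k → h k ≤ g k := by
  intro k hk
  induction k, hk using Nat.le_induction with
  | base => exact base
  | succ n hn ih => exact step n hn ih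

set_option maxHeartbeats 1000000 in
theorem local_discrete_recursion_bound (c : ℝ) (hc : 1 < c)
    (r C0 C3 : ℝ) (hr : 0 ≤ r) (hC0 : 0 ≤ C0) (hC3 : 0 ≤ C3)
    (K0 : ℕ) (hK0 : 1 ≤ K0)
    (h : ℕ → ℝ) (hnn : ∀ k, 0 ≤ h k)
    (hrec : ∀ k ≥ K0, h (k + 1) ≤ (1 - c / (c + (k : ℝ))) * h k
      + C3 / (k : ℝ) ^ (c + 1) + C0 / (k : ℝ) ^ (r + 2)) :
    ∃ C4 > 0, ∃ K ≥ K0, ∀ k ≥ K,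
      h k ≤ C4 * max (Real.log (k : ℝ) / (c + (k : ℝ)) ^ c)
        (1 / (k : ℝ) ^ (r + 1)) := by
  obtain ⟨D, hD⟩ : ∃ x : ℝ, x = C3 + C0 := ⟨_, rfl⟩
  have hDnn : 0 ≤ D := by rw [hD]; positivity
  have hc0 : 0 < c := by linarith
  rcases lt_or_ge (r + 1) c with hcase | hcase
  · -- Case A : r + 1 < c, dominate by 1 / k^(r+1)
    obtain ⟨δ, hδdef⟩ : ∃ x : ℝ, x = c - r - 1 := ⟨_, rfl⟩
    have hδ : 0 < δ := by rw [hδdef]; linarith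
    obtain ⟨K, hKdef⟩ : ∃ n : ℕ, n = max K0 (max 2 ⌈2 * c * r / δ⌉₊) := ⟨_, rfl⟩
    have hKK0 : K0 ≤ K := hKdef ▸ le_max_left _ _
    have hK2 : (2 : ℕ) ≤ K := hKdef ▸ le_trans (le_max_left _ _) (le_max_right _ _)
    have hKceil : 2 * c * r / δ ≤ (K : ℝ) := by
      refine le_trans (Nat.le_ceil _) ?_
      exact_mod_cast hKdef ▸ le_trans (le_max_right _ _) (le_max_right _ _)
    obtain ⟨C4, hC4def⟩ : ∃ x : ℝ, x = 4 * (c + 1) * D / δ + h K * (K : ℝ) ^ (r + 1) + 1 :=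
      ⟨_, rfl⟩
    have hterm1 : 0 ≤ 4 * (c + 1) * D / δ := by positivity
    have hterm2 : 0 ≤ h K * (K : ℝ) ^ (r + 1) := by
      have := hnn K; positivity
    have hC4pos : 0 < C4 := by rw [hC4def]; linarith
    refine ⟨C4, hC4pos, K, hKK0, ?_⟩
    have main : ∀ k, K ≤ k → h k ≤ C4 / (k : ℝ) ^ (r + 1) := by
      refine my_ind h (fun k => C4 / (k : ℝ) ^ (r + 1)) K ?_ ?_
      · -- base case
        have hKpos : (0 : ℝ) < (K : ℝ) ^ (r + 1) := by
          have : (0:ℝ) < (K:ℝ) := by exact_mod_cast lt_of_lt_of_le (by norm_num) hK2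
          positivity
        rw [le_div_iff₀ hKpos, hC4def]
        linarith
      · -- inductive step
        intro k hk ih
        have hkR2 : (2 : ℝ) ≤ (k : ℝ) := by exact_mod_cast le_trans hK2 hk
        have hk0 : (0 : ℝ) < (k : ℝ) := by linarith
        have hkceil : 2 * c * r / δ ≤ (k : ℝ) := le_trans hKceil (by exact_mod_cast hk)
        have hkcr : 2 * c * r ≤ δ * (k : ℝ) := by
          have := (div_le_iff₀ hδ).mp hkceil
          linarith
        have hu : (0 : ℝ) < c + (k : ℝ) := by linarith
        have hP : (0 : ℝ) < (k : ℝ) ^ (r + 1) := rpow_pos_of_pos hk0 _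
        have hQ : (0 : ℝ) < ((k : ℝ) + 1) ^ (r + 1) := rpow_pos_of_pos (by linarith) _
        -- simplified recursion
        have hrk := hrec k (le_trans hKK0 hk)
        have hexp : (k : ℝ) ^ (r + 2) ≤ (k : ℝ) ^ (c + 1) :=
          rpow_le_rpow_of_exponent_le (by linarith) (by linarith)
        have hstep1 : h (k + 1) ≤ (1 - c / (c + (k : ℝ))) * h k + D / (k : ℝ) ^ (r + 2) := by
          have h3 : C3 / (k : ℝ) ^ (c + 1) ≤ C3 / (k : ℝ) ^ (r + 2) := by
            apply div_le_div_of_nonneg_left hC3 (rpow_pos_of_pos hk0 _) hexp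
          have hDsum : D / (k : ℝ) ^ (r + 2)
              = C3 / (k : ℝ) ^ (r + 2) + C0 / (k : ℝ) ^ (r + 2) := by
            rw [hD]; ring
          rw [hDsum]; linarith [hrk]
        have ht0 : 0 ≤ 1 - c / (c + (k : ℝ)) := by
          have : c / (c + (k : ℝ)) ≤ 1 := by rw [div_le_one hu]; linarith
          linarith
        have hstep2 : h (k + 1) ≤ (1 - c / (c + (k : ℝ))) * (C4 / (k : ℝ) ^ (r + 1))
            + D / (k : ℝ) ^ (r + 2) := by
          have := mul_le_mul_of_nonneg_left ih ht0
          linarith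
        -- rewrite k^(r+2) = k^(r+1) * k
        have hsplit : (k : ℝ) ^ (r + 2) = (k : ℝ) ^ (r + 1) * (k : ℝ) := by
          rw [show r + 2 = (r + 1) + 1 by ring, rpow_add hk0, rpow_one]
        -- Bernoulli: (1 - (r+1)/(k+1)) * Q ≤ P
        have hbern : (1 - (r + 1) * (1 / ((k : ℝ) + 1))) ≤
            ((k : ℝ) / ((k : ℝ) + 1)) ^ (r + 1) := by
          have hb := my_bernoulli (x := 1 / ((k : ℝ) + 1)) (p := r + 1)
            (by linarith) (by rw [div_le_one (by linarith)]; linarith)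
          have heq : 1 - 1 / ((k : ℝ) + 1) = (k : ℝ) / ((k : ℝ) + 1) := by
            field_simp
            ring
          rwa [heq] at hb
        have hdivpow : ((k : ℝ) / ((k : ℝ) + 1)) ^ (r + 1)
            = (k : ℝ) ^ (r + 1) / ((k : ℝ) + 1) ^ (r + 1) :=
          div_rpow (le_of_lt hk0) (by linarith) _
        have hPQ : (1 - (r + 1) / ((k : ℝ) + 1)) * ((k : ℝ) + 1) ^ (r + 1)
            ≤ (k : ℝ) ^ (r + 1) := by
          rw [hdivpow] at hbern
          have hb2 := mul_le_mul_of_nonneg_right hbern (le_of_lt hQ)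
          rw [div_mul_cancel₀ _ (ne_of_gt hQ)] at hb2
          calc (1 - (r + 1) / ((k : ℝ) + 1)) * ((k : ℝ) + 1) ^ (r + 1)
              = (1 - (r + 1) * (1 / ((k : ℝ) + 1))) * ((k : ℝ) + 1) ^ (r + 1) := by ring
            _ ≤ (k : ℝ) ^ (r + 1) := hb2
        -- gap inequality
        have hgap : δ / (4 * (c + 1) * (k : ℝ)) ≤ c / (c + (k : ℝ)) - (r + 1) / ((k : ℝ) + 1) := by
          rw [div_sub_div _ _ (ne_of_gt hu) (by linarith : ((k:ℝ) + 1) ≠ 0),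
            div_le_div_iff₀ (by positivity) (by positivity)]
          have hck : c + (k : ℝ) ≤ (c + 1) * (k : ℝ) := by nlinarith
          have hk1 : (k : ℝ) + 1 ≤ 2 * (k : ℝ) := by linarith
          have hprod : (c + (k : ℝ)) * ((k : ℝ) + 1) ≤ (c + 1) * (k : ℝ) * (2 * (k : ℝ)) :=
            mul_le_mul hck hk1 (by linarith) (by positivity)
          have H1 := mul_le_mul_of_nonneg_left hprod hδ.le
          have H2 : 0 ≤ (c + 1) * (k : ℝ) * (δ * (k : ℝ) - 2 * (c * r)) := by
            apply mul_nonneg (by positivity)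
            linarith
          have hδk : c * ((k : ℝ) + 1) - (c + (k : ℝ)) * (r + 1) = δ * (k : ℝ) - c * r := by
            rw [hδdef]; ring
          nlinarith [H1, H2, hδk]
        -- scalar inequality
        have hC4big : 4 * (c + 1) * D / δ ≤ C4 := by rw [hC4def]; linarith
        have hDle : D ≤ C4 * δ / (4 * (c + 1)) := by
          rw [le_div_iff₀ (by positivity : (0:ℝ) < 4 * (c + 1))]
          have := (div_le_iff₀ hδ).mp hC4big
          nlinarith
        have h1 : D / (k : ℝ) ≤ C4 * (δ / (4 * (c + 1) * (k : ℝ))) := by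
          have heq : C4 * (δ / (4 * (c + 1) * (k : ℝ))) = (C4 * δ / (4 * (c + 1))) / (k : ℝ) := by
            field_simp
          rw [heq]
          exact (div_le_div_iff_of_pos_right hk0).mpr hDle
        have h2 : C4 * (δ / (4 * (c + 1) * (k : ℝ)))
            ≤ C4 * (c / (c + (k : ℝ)) - (r + 1) / ((k : ℝ) + 1)) :=
          mul_le_mul_of_nonneg_left hgap (le_of_lt hC4pos)
        have hfin : (1 - c / (c + (k : ℝ))) * C4 + D / (k : ℝ)
            ≤ C4 * (1 - (r + 1) / ((k : ℝ) + 1)) := by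
          have hid : (1 - c / (c + (k : ℝ))) * C4
              + C4 * (c / (c + (k : ℝ)) - (r + 1) / ((k : ℝ) + 1))
              = C4 * (1 - (r + 1) / ((k : ℝ) + 1)) := by ring
          linarith
        -- combine
        have hgoal : (1 - c / (c + (k : ℝ))) * (C4 / (k : ℝ) ^ (r + 1))
            + D / (k : ℝ) ^ (r + 2) ≤ C4 / ((k : ℝ) + 1) ^ (r + 1) := by
          rw [hsplit]
          have hLHS : (1 - c / (c + (k : ℝ))) * (C4 / (k : ℝ) ^ (r + 1))
              + D / ((k : ℝ) ^ (r + 1) * (k : ℝ))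
              = ((1 - c / (c + (k : ℝ))) * C4 + D / (k : ℝ)) / (k : ℝ) ^ (r + 1) := by
            field_simp
          rw [hLHS, div_le_div_iff₀ hP hQ]
          calc ((1 - c / (c + (k : ℝ))) * C4 + D / (k : ℝ)) * ((k : ℝ) + 1) ^ (r + 1)
              ≤ (C4 * (1 - (r + 1) / ((k : ℝ) + 1))) * ((k : ℝ) + 1) ^ (r + 1) :=
                mul_le_mul_of_nonneg_right hfin hQ.le
            _ = C4 * ((1 - (r + 1) / ((k : ℝ) + 1)) * ((k : ℝ) + 1) ^ (r + 1)) := by ring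
            _ ≤ C4 * (k : ℝ) ^ (r + 1) := mul_le_mul_of_nonneg_left hPQ hC4pos.le
        show h (k + 1) ≤ C4 / ((k + 1 : ℕ) : ℝ) ^ (r + 1)
        push_cast
        exact le_trans hstep2 hgoal
    intro k hk
    have hmk := main k hk
    have hmax : 1 / (k : ℝ) ^ (r + 1) ≤ max (Real.log (k : ℝ) / (c + (k : ℝ)) ^ c)
        (1 / (k : ℝ) ^ (r + 1)) := le_max_right _ _
    calc h k ≤ C4 / (k : ℝ) ^ (r + 1) := hmk
      _ = C4 * (1 / (k : ℝ) ^ (r + 1)) := by ring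
      _ ≤ _ := mul_le_mul_of_nonneg_left hmax hC4pos.le
  · -- Case B : c ≤ r + 1, dominate by log k / (c + k)^c
    obtain ⟨K, hKdef⟩ : ∃ n : ℕ, n = max K0 3 := ⟨_, rfl⟩
    have hKK0 : K0 ≤ K := hKdef ▸ le_max_left _ _
    have hK3 : (3 : ℕ) ≤ K := hKdef ▸ le_max_right _ _
    have hKR3 : (3 : ℝ) ≤ (K : ℝ) := by exact_mod_cast hK3
    have hlogK : 0 < Real.log (K : ℝ) := Real.log_pos (by linarith)
    have hUK : (0 : ℝ) < (c + (K : ℝ)) ^ c := rpow_pos_of_pos (by linarith) _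
    obtain ⟨C4, hC4def⟩ : ∃ x : ℝ,
        x = 2 * D * (c + 2) ^ c + h K * (c + (K : ℝ)) ^ c / Real.log (K : ℝ) + 1 := ⟨_, rfl⟩
    have hterm1 : 0 ≤ 2 * D * (c + 2) ^ c := by positivity
    have hterm2 : 0 ≤ h K * (c + (K : ℝ)) ^ c / Real.log (K : ℝ) := by
      have := hnn K; positivity
    have hC4pos : 0 < C4 := by rw [hC4def]; linarith
    refine ⟨C4, hC4pos, K, hKK0, ?_⟩
    have main : ∀ k, K ≤ k →
        h k ≤ C4 * (Real.log (k : ℝ) / (c + (k : ℝ)) ^ c) := by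
      refine my_ind h (fun k => C4 * (Real.log (k : ℝ) / (c + (k : ℝ)) ^ c)) K ?_ ?_
      · -- base case
        have hbase2 : h K * (c + (K : ℝ)) ^ c / Real.log (K : ℝ) ≤ C4 := by
          rw [hC4def]; linarith
        rw [div_le_iff₀ hlogK] at hbase2
        rw [← mul_div_assoc, le_div_iff₀ hUK]
        exact hbase2
      · -- inductive step
        intro k hk ih
        have hkR3 : (3 : ℝ) ≤ (k : ℝ) := le_trans hKR3 (by exact_mod_cast hk)
        have hk0 : (0 : ℝ) < (k : ℝ) := by linarith
        have hu : (0 : ℝ) < c + (k : ℝ) := by linarith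
        have hu1 : (0 : ℝ) < c + (k : ℝ) + 1 := by linarith
        have hP : (0 : ℝ) < (c + (k : ℝ)) ^ c := rpow_pos_of_pos hu _
        have hQ : (0 : ℝ) < (c + (k : ℝ) + 1) ^ c := rpow_pos_of_pos hu1 _
        have hlogk : 0 ≤ Real.log (k : ℝ) := Real.log_nonneg (by linarith)
        have hkc1 : (0 : ℝ) < (k : ℝ) ^ (c + 1) := rpow_pos_of_pos hk0 _
        -- simplified recursion
        have hrk := hrec k (le_trans hKK0 hk)
        have hexp : (k : ℝ) ^ (c + 1) ≤ (k : ℝ) ^ (r + 2) :=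
          rpow_le_rpow_of_exponent_le (by linarith) (by linarith)
        have hstep1 : h (k + 1) ≤ (1 - c / (c + (k : ℝ))) * h k + D / (k : ℝ) ^ (c + 1) := by
          have h3 : C0 / (k : ℝ) ^ (r + 2) ≤ C0 / (k : ℝ) ^ (c + 1) :=
            div_le_div_of_nonneg_left hC0 hkc1 hexp
          have hDsum : D / (k : ℝ) ^ (c + 1)
              = C3 / (k : ℝ) ^ (c + 1) + C0 / (k : ℝ) ^ (c + 1) := by
            rw [hD]; ring
          rw [hDsum]; linarith [hrk]
        have ht0 : 0 ≤ 1 - c / (c + (k : ℝ)) := by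
          have : c / (c + (k : ℝ)) ≤ 1 := by rw [div_le_one hu]; linarith
          linarith
        have hstep2 : h (k + 1) ≤ (1 - c / (c + (k : ℝ)))
            * (C4 * (Real.log (k : ℝ) / (c + (k : ℝ)) ^ c)) + D / (k : ℝ) ^ (c + 1) := by
          have := mul_le_mul_of_nonneg_left ih ht0
          linarith
        -- F1 : t * Q ≤ P  via Bernoulli
        have hbern : (1 - c * (1 / (c + (k : ℝ) + 1))) ≤
            ((c + (k : ℝ)) / (c + (k : ℝ) + 1)) ^ c := by
          have hb := my_bernoulli (x := 1 / (c + (k : ℝ) + 1)) (p := c)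
            hc.le (by rw [div_le_one hu1]; linarith)
          have heq : 1 - 1 / (c + (k : ℝ) + 1) = (c + (k : ℝ)) / (c + (k : ℝ) + 1) := by
            field_simp
            ring
          rwa [heq] at hb
        have hdivpow : ((c + (k : ℝ)) / (c + (k : ℝ) + 1)) ^ c
            = (c + (k : ℝ)) ^ c / (c + (k : ℝ) + 1) ^ c := div_rpow hu.le hu1.le _
        have hF1 : (1 - c / (c + (k : ℝ))) * (c + (k : ℝ) + 1) ^ c ≤ (c + (k : ℝ)) ^ c := by
          rw [hdivpow] at hbern
          have hb2 := mul_le_mul_of_nonneg_right hbern hQ.le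
          rw [div_mul_cancel₀ _ (ne_of_gt hQ)] at hb2
          have hcc : c * (1 / (c + (k : ℝ) + 1)) ≤ c / (c + (k : ℝ)) := by
            rw [mul_one_div]
            exact div_le_div_of_nonneg_left hc0.le hu (by linarith)
          have hmono : (1 - c / (c + (k : ℝ))) ≤ 1 - c * (1 / (c + (k : ℝ) + 1)) := by linarith
          calc (1 - c / (c + (k : ℝ))) * (c + (k : ℝ) + 1) ^ c
              ≤ (1 - c * (1 / (c + (k : ℝ) + 1))) * (c + (k : ℝ) + 1) ^ c :=
                mul_le_mul_of_nonneg_right hmono hQ.le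
            _ ≤ (c + (k : ℝ)) ^ c := hb2
        -- F2 : log increment
        have hF2 : Real.log (k : ℝ) + 1 / ((k : ℝ) + 1) ≤ Real.log ((k : ℝ) + 1) := by
          have hx : (0 : ℝ) < ((k : ℝ) + 1) / (k : ℝ) := by positivity
          have hlb := Real.one_sub_inv_le_log_of_pos hx
          have hinv : (((k : ℝ) + 1) / (k : ℝ))⁻¹ = (k : ℝ) / ((k : ℝ) + 1) := by
            rw [inv_div]
          have hsub : 1 - (k : ℝ) / ((k : ℝ) + 1) = 1 / ((k : ℝ) + 1) := by
            field_simp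
            ring
          have hld : Real.log (((k : ℝ) + 1) / (k : ℝ))
              = Real.log ((k : ℝ) + 1) - Real.log (k : ℝ) :=
            Real.log_div (by linarith) (ne_of_gt hk0)
          rw [hinv, hsub, hld] at hlb
          linarith
        -- F3 : error absorption
        have hQle : (c + (k : ℝ) + 1) ^ c ≤ (c + 2) ^ c * (k : ℝ) ^ c := by
          rw [← mul_rpow (by linarith) hk0.le]
          apply rpow_le_rpow hu1.le _ hc0.le
          nlinarith
        have hsplitc : (k : ℝ) ^ (c + 1) = (k : ℝ) ^ c * (k : ℝ) := by
          rw [rpow_add hk0, rpow_one]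
        have hC4big : 2 * D * (c + 2) ^ c ≤ C4 := by rw [hC4def]; linarith
        have hF3 : D / (k : ℝ) ^ (c + 1) ≤ C4 / (((k : ℝ) + 1) * (c + (k : ℝ) + 1) ^ c) := by
          rw [div_le_div_iff₀ hkc1 (by positivity)]
          have hb1 : D * (((k : ℝ) + 1) * (c + (k : ℝ) + 1) ^ c)
              ≤ D * ((2 * (k : ℝ)) * ((c + 2) ^ c * (k : ℝ) ^ c)) := by
            apply mul_le_mul_of_nonneg_left _ hDnn
            apply mul_le_mul (by linarith) hQle hQ.le (by positivity)
          have hb2 : D * ((2 * (k : ℝ)) * ((c + 2) ^ c * (k : ℝ) ^ c))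
              = (2 * D * (c + 2) ^ c) * ((k : ℝ) ^ c * (k : ℝ)) := by ring
          have hb3 : (2 * D * (c + 2) ^ c) * ((k : ℝ) ^ c * (k : ℝ))
              ≤ C4 * ((k : ℝ) ^ c * (k : ℝ)) := by
            apply mul_le_mul_of_nonneg_right hC4big
            positivity
          rw [hsplitc]
          linarith
        -- combine
        have hta : (1 - c / (c + (k : ℝ))) * (C4 * (Real.log (k : ℝ) / (c + (k : ℝ)) ^ c))
            ≤ C4 * Real.log (k : ℝ) / (c + (k : ℝ) + 1) ^ c := by
          have htP : (1 - c / (c + (k : ℝ))) / (c + (k : ℝ)) ^ c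
              ≤ 1 / (c + (k : ℝ) + 1) ^ c := by
            rw [div_le_div_iff₀ hP hQ]
            linarith [hF1]
          have hCl : 0 ≤ C4 * Real.log (k : ℝ) := mul_nonneg hC4pos.le hlogk
          calc (1 - c / (c + (k : ℝ))) * (C4 * (Real.log (k : ℝ) / (c + (k : ℝ)) ^ c))
              = (C4 * Real.log (k : ℝ)) * ((1 - c / (c + (k : ℝ))) / (c + (k : ℝ)) ^ c) := by
                ring
            _ ≤ (C4 * Real.log (k : ℝ)) * (1 / (c + (k : ℝ) + 1) ^ c) :=
                mul_le_mul_of_nonneg_left htP hCl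
            _ = C4 * Real.log (k : ℝ) / (c + (k : ℝ) + 1) ^ c := by ring
        have hsum : C4 * Real.log (k : ℝ) / (c + (k : ℝ) + 1) ^ c
            + C4 / (((k : ℝ) + 1) * (c + (k : ℝ) + 1) ^ c)
            ≤ C4 * (Real.log ((k : ℝ) + 1) / (c + (k : ℝ) + 1) ^ c) := by
          have heq : C4 * Real.log (k : ℝ) / (c + (k : ℝ) + 1) ^ c
              + C4 / (((k : ℝ) + 1) * (c + (k : ℝ) + 1) ^ c)
              = (C4 * (Real.log (k : ℝ) + 1 / ((k : ℝ) + 1))) / (c + (k : ℝ) + 1) ^ c := by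
            field_simp
          have hnum : C4 * (Real.log (k : ℝ) + 1 / ((k : ℝ) + 1))
              ≤ C4 * Real.log ((k : ℝ) + 1) := mul_le_mul_of_nonneg_left hF2 hC4pos.le
          rw [heq, ← mul_div_assoc]
          exact (div_le_div_iff_of_pos_right hQ).mpr hnum
        show h (k + 1) ≤ C4 * (Real.log ((k + 1 : ℕ) : ℝ) / (c + ((k + 1 : ℕ) : ℝ)) ^ c)
        push_cast
        have hca : c + ((k : ℝ) + 1) = c + (k : ℝ) + 1 := by ring
        rw [hca]
        calc h (k + 1) ≤ (1 - c / (c + (k : ℝ)))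
              * (C4 * (Real.log (k : ℝ) / (c + (k : ℝ)) ^ c)) + D / (k : ℝ) ^ (c + 1) :=
              hstep2
          _ ≤ C4 * Real.log (k : ℝ) / (c + (k : ℝ) + 1) ^ c
              + C4 / (((k : ℝ) + 1) * (c + (k : ℝ) + 1) ^ c) := add_le_add hta hF3
          _ ≤ C4 * (Real.log ((k : ℝ) + 1) / (c + (k : ℝ) + 1) ^ c) := hsum
    intro k hk
    have hmk := main k hk
    have hmax : Real.log (k : ℝ) / (c + (k : ℝ)) ^ c ≤
        max (Real.log (k : ℝ) / (c + (k : ℝ)) ^ c) (1 / (k : ℝ) ^ (r + 1)) := le_max_left _ _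
    exact le_trans hmk (mul_le_mul_of_nonneg_left hmax hC4pos.le)
end
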